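/- arXiv:1810.00863 — 5 statements merged into one kernel-verified Lean document; each statement's English description precedes it below -/
import Mathlib

section
/- Let H be a (possibly unbounded) self-adjoint operator on a separable complex Hilbert space ℋ, let α ∈ (0,1], and let φ₀ ∈ D(|H|^α). Then the unitary one-parameter group T_t^S := e^{-itH} satisfies, for all t, s ≥ 0, ‖T_t^S φ₀ − T_s^S φ₀‖ ≤ g_α ‖|H|^α φ₀‖ |t − s|^α. -/
/-!
By the group law and isometry, `‖T_t φ₀ - T_s φ₀‖ = ‖T_{t-s} φ₀ - φ₀‖`, whose square is
`∫ (2 - 2 cos ((t - s) λ)) dμ_{φ₀}(λ)`. Interpolating between `2 - 2 cos u ≤ u²` and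
`2 - 2 cos u ≤ 4` gives `2 - 2 cos u ≤ (2^{1-α} |u|^α)²`, so the integral is at most
`(2^{1-α} |t - s|^α ‖|H|^α φ₀‖)²`. Finally `2^{1-α} ≤ g_α`, because
`ζ_α = 2^{1-α} α^{-α} (1-α)^{α-1}`.
-/

open scoped ENNReal NNReal
open MeasureTheory

noncomputable section

local notation "⟪" x ", " y "⟫" => @inner ℂ _ _ x y

/-- `ζ_α := (2α/(1-α))^{1-α} + 2(2α/(1-α))^{-α}` for `α ∈ (0,1)`, and `ζ₁ := 1`. -/
def zetaC (α : ℝ) : ℝ :=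
  if α = 1 then 1 else (2 * α / (1 - α)) ^ (1 - α) + 2 * (2 * α / (1 - α)) ^ (-α)

/-- `g_α := ζ_α (1-α)^{(1-α)/2} α^{α/2}`. -/
def gC (α : ℝ) : ℝ := zetaC α * (1 - α) ^ ((1 - α) / 2) * α ^ (α / 2)

/-- The `p`-th absolute spectral moment `∫ |s|^p dμ_x(s)` of the (vector-indexed) spectral
measure family `μ`; for the spectral measure of a self-adjoint operator `H` this is
`‖|H|^{p/2} x‖²` (possibly `∞`). -/
def specMoment {ℋ : Type*} [NormedAddCommGroup ℋ] [InnerProductSpace ℂ ℋ]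
    (μ : ℋ → Measure ℝ) (p : ℝ) (x : ℋ) : ℝ≥0∞ :=
  ∫⁻ s, ENNReal.ofReal (|s| ^ p) ∂(μ x)

lemma zetaC_eq {α : ℝ} (h0 : 0 < α) (h1 : α < 1) :
    zetaC α = 2 ^ (1 - α) * α ^ (-α) * (1 - α) ^ (α - 1) := by
  have hb : 0 < 1 - α := by linarith
  have hq : (2 * α / (1 - α)) ^ α = 2 ^ α * α ^ α / (1 - α) ^ α := by
    rw [Real.div_rpow (by positivity) hb.le, Real.mul_rpow (by norm_num) h0.le]
  rw [zetaC, if_neg h1.ne, Real.rpow_sub (by positivity), Real.rpow_neg (by positivity), hq,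
    Real.rpow_neg h0.le, Real.rpow_sub hb, Real.rpow_sub (by norm_num)]
  simp only [Real.rpow_one]
  field_simp
  ring

lemma two_rpow_one_sub_le_gC {α : ℝ} (h0 : 0 < α) (h1 : α ≤ 1) : 2 ^ (1 - α) ≤ gC α := by
  rcases h1.eq_or_lt with rfl | h1
  · simp [gC, zetaC]
  have hb : 0 < 1 - α := by linarith
  have hgC : gC α =
      2 ^ (1 - α) * ((1 - α) ^ (α - 1) * (1 - α) ^ ((1 - α) / 2)) * (α ^ (-α) * α ^ (α / 2)) := by
    rw [gC, zetaC_eq h0 h1]; ring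
  have h1α : 1 ≤ (1 - α) ^ (α - 1 + (1 - α) / 2) :=
    Real.one_le_rpow_of_pos_of_le_one_of_nonpos hb (by linarith) (by linarith)
  have hα : 1 ≤ α ^ (-α + α / 2) :=
    Real.one_le_rpow_of_pos_of_le_one_of_nonpos h0 h1.le (by linarith)
  rw [hgC, ← Real.rpow_add hb, ← Real.rpow_add h0]
  calc (2 : ℝ) ^ (1 - α) = 2 ^ (1 - α) * 1 * 1 := by ring
    _ ≤ _ := by gcongr

lemma min_le_rpow_mul_rpow {x y θ : ℝ} (hx : 0 ≤ x) (hy : 0 ≤ y) (hθ0 : 0 ≤ θ) (hθ1 : θ ≤ 1) :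
    min x y ≤ x ^ θ * y ^ (1 - θ) := by
  have hm : 0 ≤ min x y := le_min hx hy
  calc min x y = min x y ^ θ * min x y ^ (1 - θ) := by
        rw [← Real.rpow_add' hm (by simp), add_sub_cancel, Real.rpow_one]
    _ ≤ x ^ θ * y ^ (1 - θ) := by
        have : 0 ≤ 1 - θ := by linarith
        gcongr
        exacts [min_le_left x y, min_le_right x y]

lemma two_sub_two_cos_le_min_sq (u : ℝ) : 2 - 2 * Real.cos u ≤ min |u| 2 ^ 2 := by
  rcases le_total |u| 2 with h | h
  · rw [min_eq_left h, sq_abs]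
    linarith [Real.one_sub_sq_div_two_le_cos (x := u)]
  · rw [min_eq_right h]
    linarith [Real.neg_one_le_cos u]

lemma two_sub_two_cos_le_rpow {α : ℝ} (h0 : 0 ≤ α) (h1 : α ≤ 1) (u : ℝ) :
    2 - 2 * Real.cos u ≤ (2 ^ (1 - α) * |u| ^ α) ^ 2 := by
  refine (two_sub_two_cos_le_min_sq u).trans ?_
  rw [mul_comm]
  gcongr
  exact min_le_rpow_mul_rpow (abs_nonneg u) zero_le_two h0 h1

section SpectralEstimate

variable {ℋ : Type*} [NormedAddCommGroup ℋ] [InnerProductSpace ℂ ℋ]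
  {ν : Measure ℝ} [IsFiniteMeasure ν]

lemma re_integral_exp_neg_I_mul (r : ℝ) :
    (∫ s, Complex.exp (-(Complex.I * r * s)) ∂ν).re = ∫ s, Real.cos (r * s) ∂ν := by
  have hexp (s : ℝ) : -(Complex.I * r * s) = ((-(r * s) : ℝ) : ℂ) * Complex.I := by
    push_cast; ring
  have hint : Integrable (fun s : ℝ => Complex.exp (-(Complex.I * r * s))) ν :=
    Integrable.of_bound (by fun_prop) 1
      (ae_of_all _ fun s => by rw [hexp, Complex.norm_exp_ofReal_mul_I])
  rw [← RCLike.re_to_complex, ← integral_re hint]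
  simp only [RCLike.re_to_complex, hexp, Complex.exp_ofReal_mul_I_re, Real.cos_neg]

lemma norm_sub_sq_eq_integral_two_sub_two_cos {φ ψ : ℋ} {r : ℝ} (hψ : ‖ψ‖ = ‖φ‖)
    (hν : ν.real Set.univ = ‖φ‖ ^ 2)
    (hinner : ⟪φ, ψ⟫ = ∫ s, Complex.exp (-(Complex.I * r * s)) ∂ν) :
    ‖ψ - φ‖ ^ 2 = ∫ s, (2 - 2 * Real.cos (r * s)) ∂ν := by
  have hcos : Integrable (fun s : ℝ => Real.cos (r * s)) ν :=
    Integrable.of_bound (by fun_prop) 1 (ae_of_all _ fun s => Real.abs_cos_le_one _)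
  rw [integral_sub (integrable_const 2) (hcos.const_mul 2), integral_const, integral_const_mul,
    smul_eq_mul, hν, ← re_integral_exp_neg_I_mul, ← hinner, norm_sub_rev, @norm_sub_sq ℂ, hψ]
  simp only [RCLike.re_to_complex]
  ring

lemma norm_sub_le_of_inner_eq_integral_exp {φ ψ : ℋ} {r α M : ℝ} (h0 : 0 ≤ α) (h1 : α ≤ 1) (hM : 0 ≤ M)
    (hψ : ‖ψ‖ = ‖φ‖) (hν : ν.real Set.univ = ‖φ‖ ^ 2)
    (hinner : ⟪φ, ψ⟫ = ∫ s, Complex.exp (-(Complex.I * r * s)) ∂ν)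
    (hmoment : ENNReal.ofReal (M ^ 2) = ∫⁻ s, ENNReal.ofReal (|s| ^ (2 * α)) ∂ν) :
    ‖ψ - φ‖ ≤ 2 ^ (1 - α) * |r| ^ α * M := by
  set c := 2 ^ (1 - α) * |r| ^ α
  have hpoint (s : ℝ) : 2 - 2 * Real.cos (r * s) ≤ c ^ 2 * |s| ^ (2 * α) := by
    have h := two_sub_two_cos_le_rpow h0 h1 (r * s)
    rwa [abs_mul, Real.mul_rpow (abs_nonneg r) (abs_nonneg s), ← mul_assoc, mul_pow,
      ← Real.rpow_mul_natCast (abs_nonneg s), mul_comm α] at h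
  have hsq : ENNReal.ofReal (‖ψ - φ‖ ^ 2) ≤ ENNReal.ofReal ((c * M) ^ 2) := by
    calc ENNReal.ofReal (‖ψ - φ‖ ^ 2)
        = ∫⁻ s, ENNReal.ofReal (2 - 2 * Real.cos (r * s)) ∂ν := by
          rw [norm_sub_sq_eq_integral_two_sub_two_cos hψ hν hinner,
            ofReal_integral_eq_lintegral_ofReal
              (Integrable.of_bound (by fun_prop) 4 (ae_of_all _ fun s => ?_))
              (ae_of_all _ fun s => show 0 ≤ _ by linarith [Real.cos_le_one (r * s)])]
          rw [Real.norm_eq_abs, abs_le]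
          constructor <;> linarith [Real.cos_le_one (r * s), Real.neg_one_le_cos (r * s)]
      _ ≤ ∫⁻ s, ENNReal.ofReal (c ^ 2) * ENNReal.ofReal (|s| ^ (2 * α)) ∂ν := by
          gcongr with s
          rw [← ENNReal.ofReal_mul (sq_nonneg c)]
          exact ENNReal.ofReal_le_ofReal (hpoint s)
      _ = ENNReal.ofReal ((c * M) ^ 2) := by
          rw [lintegral_const_mul' _ _ ENNReal.ofReal_ne_top, ← hmoment,
            ← ENNReal.ofReal_mul (sq_nonneg c), mul_pow c]
  have hc : 0 ≤ c * M := by positivity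
  rw [ENNReal.ofReal_le_ofReal_iff (sq_nonneg _)] at hsq
  exact (pow_le_pow_iff_left₀ (norm_nonneg _) hc two_ne_zero).mp hsq

end SpectralEstimate

theorem statement0_general
    {ℋ : Type*} [NormedAddCommGroup ℋ] [InnerProductSpace ℂ ℋ]
    (μ : ℋ → Measure ℝ)
    (hμtot : ∀ x : ℋ, μ x Set.univ = ENNReal.ofReal (‖x‖ ^ 2))
    (T : ℝ → ℋ →L[ℂ] ℋ)
    (hTadd : ∀ t s : ℝ, (T t).comp (T s) = T (t + s))
    (hTiso : ∀ (t : ℝ) (x : ℋ), ‖T t x‖ = ‖x‖)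
    (hμT : ∀ (x : ℋ) (t : ℝ), ⟪x, T t x⟫ = ∫ s, Complex.exp (-(Complex.I * t * s)) ∂(μ x))
    (α : ℝ) (hα : α ∈ Set.Ioc (0 : ℝ) 1)
    (A : ℋ →ₗ.[ℂ] ℋ)
    (hAval : ∀ x : A.domain, ENNReal.ofReal (‖A x‖ ^ 2) = specMoment μ (2 * α) (x : ℋ))
    (φ₀ : ℋ) (hφ₀ : φ₀ ∈ A.domain) :
    ∀ t s : ℝ, 0 ≤ t → 0 ≤ s →
      ‖T t φ₀ - T s φ₀‖ ≤ gC α * ‖A ⟨φ₀, hφ₀⟩‖ * |t - s| ^ α := by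
  obtain ⟨h0, h1⟩ := hα
  intro t s _ _
  have : IsFiniteMeasure (μ φ₀) := ⟨by rw [hμtot]; exact ENNReal.ofReal_lt_top⟩
  have hν : (μ φ₀).real Set.univ = ‖φ₀‖ ^ 2 := by
    rw [measureReal_def, hμtot, ENNReal.toReal_ofReal (sq_nonneg _)]
  have hshift : T t φ₀ - T s φ₀ = T s (T (t - s) φ₀ - φ₀) := by
    rw [map_sub, ← ContinuousLinearMap.comp_apply, hTadd, add_sub_cancel]
  calc ‖T t φ₀ - T s φ₀‖ = ‖T (t - s) φ₀ - φ₀‖ := by rw [hshift, hTiso]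
    _ ≤ 2 ^ (1 - α) * |t - s| ^ α * ‖A ⟨φ₀, hφ₀⟩‖ :=
        norm_sub_le_of_inner_eq_integral_exp h0.le h1 (norm_nonneg _) (hTiso _ _) hν (hμT _ _)
          (hAval ⟨φ₀, hφ₀⟩)
    _ ≤ gC α * ‖A ⟨φ₀, hφ₀⟩‖ * |t - s| ^ α := by
        rw [mul_right_comm]
        gcongr
        exact two_rpow_one_sub_le_gC h0 h1

/-- Closed systems 1, autonomous case.  `H` is an (unbounded) self-adjoint
operator on a separable complex Hilbert space, encoded together with its spectral measure
family `μ` (`μ x` is the spectral measure of `H` at the vector `x`, so that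
`⟪x, e^{-itH} x⟫ = ∫ e^{-its} dμ_x(s)` and `μ x (ℝ) = ‖x‖²`).  `T` is the unitary
one-parameter group `T_t = e^{-itH}` generated by `H`, and `A = |H|^α` is the fractional
power of `|H|`, characterized by `‖A x‖² = ∫ |s|^{2α} dμ_x(s)` on its natural domain.
Then for `φ₀ ∈ D(|H|^α)` and all `t, s ≥ 0`:
`‖T_t φ₀ − T_s φ₀‖ ≤ g_α ‖|H|^α φ₀‖ |t − s|^α`. -/
theorem statement0
    {ℋ : Type*} [NormedAddCommGroup ℋ] [InnerProductSpace ℂ ℋ] [CompleteSpace ℋ]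
    [TopologicalSpace.SeparableSpace ℋ]
    (H : ℋ →ₗ.[ℂ] ℋ) (hHsa : IsSelfAdjoint H)
    (μ : ℋ → Measure ℝ)
    (hμtot : ∀ x : ℋ, μ x Set.univ = ENNReal.ofReal (‖x‖ ^ 2))
    (hHdom : ∀ x : ℋ, x ∈ H.domain ↔ specMoment μ 2 x ≠ ∞)
    (hHval : ∀ x : H.domain, ⟪(x : ℋ), H x⟫ = ∫ s, (s : ℂ) ∂(μ x))
    (T : ℝ → ℋ →L[ℂ] ℋ)
    (hT0 : T 0 = ContinuousLinearMap.id ℂ ℋ)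
    (hTadd : ∀ t s : ℝ, (T t).comp (T s) = T (t + s))
    (hTiso : ∀ (t : ℝ) (x : ℋ), ‖T t x‖ = ‖x‖)
    (hμT : ∀ (x : ℋ) (t : ℝ), ⟪x, T t x⟫ = ∫ s, Complex.exp (-(Complex.I * t * s)) ∂(μ x))
    (α : ℝ) (hα : α ∈ Set.Ioc (0 : ℝ) 1)
    (A : ℋ →ₗ.[ℂ] ℋ)
    (hAdom : ∀ x : ℋ, x ∈ A.domain ↔ specMoment μ (2 * α) x ≠ ∞)
    (hAval : ∀ x : A.domain, ENNReal.ofReal (‖A x‖ ^ 2) = specMoment μ (2 * α) (x : ℋ))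
    (φ₀ : ℋ) (hφ₀ : φ₀ ∈ A.domain) :
    ∀ t s : ℝ, 0 ≤ t → 0 ≤ s →
      ‖T t φ₀ - T s φ₀‖ ≤ gC α * ‖A ⟨φ₀, hφ₀⟩‖ * |t - s| ^ α :=
  statement0_general μ hμtot T hTadd hTiso hμT α hα A hAval φ₀ hφ₀

end
end

section
/- Let H be a self-adjoint operator on a separable complex Hilbert space, α ∈ (0,1], E > inf σ(|H|), and let φ(t) = e^{-itH}φ₀ solve the Schrödinger equation with unit-norm initial state φ₀ satisfying tr(|H|^{2α} |φ₀⟩⟨φ₀|) ≤ E^{2α}. If at time t the state φ(t) is at relative angle θ := arccos(Re⟨φ(0), φ(t)⟩) ∈ [0,π] from φ₀, then t ≥ ((2 − 2cos θ)/g_α²)^{1/(2α)} · (1/E). In particular, for α = 1/2, t ≥ ((1 − cos θ)/2) · (1/E). -/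
/-! Since `⟪φ₀, e^{-itH} φ₀⟫` is the characteristic function of the spectral measure `μ_{φ₀}`
at `-t`, `2 - 2 cos θ = ∫ (2 - 2 cos (t s)) dμ_{φ₀}(s)`. The elementary bound
`2 - 2 cos y ≤ min (y², 4) ≤ 2^{2-2α} |y|^{2α}` and the moment bound give
`2 - 2 cos θ ≤ 2^{2-2α} (t E)^{2α}`, and `g_α² = 2^{2-2α} / (α^α (1-α)^{1-α}) ≥ 2^{2-2α}`;
solving for `t` gives the speed limit. -/

open scoped ENNReal NNReal
open MeasureTheory

noncomputable section

local notation "⟪" x ", " y "⟫" => @inner ℂ _ _ x y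

lemma two_sub_two_cos_le_two_rpow_mul_abs_rpow {p : ℝ} (hp0 : 0 ≤ p) (hp2 : p ≤ 2) (y : ℝ) :
    2 - 2 * Real.cos y ≤ 2 ^ (2 - p) * |y| ^ p := by
  rcases le_or_gt |y| 2 with hy | hy
  · calc 2 - 2 * Real.cos y ≤ |y| ^ (2 - p) * |y| ^ p := by
          rw [← Real.rpow_add' (abs_nonneg y) (by norm_num), sub_add_cancel, Real.rpow_two, sq_abs]
          linarith [Real.one_sub_sq_div_two_le_cos (x := y)]
      _ ≤ 2 ^ (2 - p) * |y| ^ p := by gcongr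
  · calc 2 - 2 * Real.cos y ≤ 2 ^ (2 - p) * 2 ^ p := by
          rw [← Real.rpow_add two_pos, sub_add_cancel]
          linarith [Real.neg_one_le_cos y]
      _ ≤ 2 ^ (2 - p) * |y| ^ p := by gcongr

lemma gC_eq_exp {α : ℝ} (ha : 0 < α) (ha1 : α < 1) :
    gC α = Real.exp (Real.log 2 * (1 - α) - Real.log α * (α / 2)
      - Real.log (1 - α) * ((1 - α) / 2)) := by
  have hb : 0 < 1 - α := by linarith
  have hβ : 0 < 2 * α / (1 - α) := by positivity
  have hlog : Real.log (2 * α / (1 - α)) = Real.log 2 + Real.log α - Real.log (1 - α) := by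
    rw [Real.log_div (by positivity) hb.ne', Real.log_mul two_ne_zero ha.ne']
  rw [gC, zetaC, if_neg ha1.ne, Real.rpow_def_of_pos hβ, Real.rpow_def_of_pos hβ,
    Real.rpow_def_of_pos hb, Real.rpow_def_of_pos ha, hlog]
  nth_rewrite 2 [← Real.exp_log two_pos]
  set R := Real.log 2 * (1 - α) - Real.log α * (α / 2) - Real.log (1 - α) * ((1 - α) / 2)
  have hexp_α : (Real.log 2 + Real.log α - Real.log (1 - α)) * (1 - α)
      + Real.log (1 - α) * ((1 - α) / 2) + Real.log α * (α / 2) = Real.log α + R := by ring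
  have hexp_one_sub : Real.log 2 + (Real.log 2 + Real.log α - Real.log (1 - α)) * -α
      + Real.log (1 - α) * ((1 - α) / 2) + Real.log α * (α / 2) = Real.log (1 - α) + R := by ring
  rw [← Real.exp_add, add_mul, add_mul, ← Real.exp_add, ← Real.exp_add, ← Real.exp_add,
    ← Real.exp_add, hexp_α, hexp_one_sub, Real.exp_add, Real.exp_add, Real.exp_log ha,
    Real.exp_log hb]
  ring

lemma two_rpow_le_gC_sq {α : ℝ} (ha : 0 < α) (ha1 : α ≤ 1) :
    (2 : ℝ) ^ (2 - 2 * α) ≤ gC α ^ 2 := by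
  rcases ha1.eq_or_lt with rfl | ha1
  · simp [gC, zetaC]
  · have hLa : Real.log α ≤ 0 := Real.log_nonpos ha.le ha1.le
    have hLb : Real.log (1 - α) ≤ 0 := Real.log_nonpos (by linarith) (by linarith)
    rw [gC_eq_exp ha ha1, Real.rpow_def_of_pos two_pos, sq, ← Real.exp_add, Real.exp_le_exp]
    nlinarith

lemma gC_half : gC (1 / 2) = 2 := by
  rw [gC_eq_exp (by norm_num) (by norm_num), show (1 : ℝ) - 1 / 2 = 2⁻¹ by norm_num, one_div,
    Real.log_inv]
  convert Real.exp_log two_pos using 2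
  ring

lemma integrable_cos_mul (ν : Measure ℝ) [IsFiniteMeasure ν] (t : ℝ) :
    Integrable (fun s => Real.cos (t * s)) ν :=
  (integrable_const 1).mono' (by fun_prop : Continuous _).aestronglyMeasurable
    (ae_of_all _ fun s => Real.abs_cos_le_one _)

lemma re_charFun_eq_integral_cos (ν : Measure ℝ) [IsFiniteMeasure ν] (t : ℝ) :
    (charFun ν t).re = ∫ s, Real.cos (t * s) ∂ν := by
  rw [charFun_eq_integral_innerProbChar, ← RCLike.re_to_complex,
    ← integral_re ((BoundedContinuousFunction.innerProbChar t).integrable ν)]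
  congr with s
  rw [BoundedContinuousFunction.innerProbChar_apply, RCLike.inner_apply, conj_trivial,
    RCLike.re_to_complex, Complex.exp_ofReal_mul_I_re]

lemma ofReal_two_sub_two_re_charFun_le (ν : Measure ℝ) [IsProbabilityMeasure ν]
    {p : ℝ} (hp0 : 0 ≤ p) (hp2 : p ≤ 2) (t : ℝ) :
    ENNReal.ofReal (2 - 2 * (charFun ν t).re)
      ≤ ENNReal.ofReal (2 ^ (2 - p) * |t| ^ p) * ∫⁻ s, ENNReal.ofReal (|s| ^ p) ∂ν := by
  have hint : Integrable (fun s => 2 - 2 * Real.cos (t * s)) ν :=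
    (integrable_const 2).sub ((integrable_cos_mul ν t).const_mul 2)
  have heq : 2 - 2 * (charFun ν t).re = ∫ s, (2 - 2 * Real.cos (t * s)) ∂ν := by
    rw [integral_sub (integrable_const 2) ((integrable_cos_mul ν t).const_mul 2),
      integral_const_mul, re_charFun_eq_integral_cos]
    simp
  rw [heq, ofReal_integral_eq_lintegral_ofReal hint
      (ae_of_all _ fun s => by simp only [Pi.zero_apply]; linarith [Real.cos_le_one (t * s)]),
    ← lintegral_const_mul' _ _ ENNReal.ofReal_ne_top]
  refine lintegral_mono fun s => ?_
  rw [← ENNReal.ofReal_mul (by positivity), mul_assoc,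
    ← Real.mul_rpow (abs_nonneg t) (abs_nonneg s), ← abs_mul]
  exact ENNReal.ofReal_le_ofReal (two_sub_two_cos_le_two_rpow_mul_abs_rpow hp0 hp2 _)

lemma two_sub_two_re_charFun_le_gC_sq_mul (ν : Measure ℝ) [IsProbabilityMeasure ν]
    {α E : ℝ} (hα0 : 0 < α) (hα1 : α ≤ 1) (hE : 0 ≤ E)
    (hmoment : ∫⁻ s, ENNReal.ofReal (|s| ^ (2 * α)) ∂ν ≤ ENNReal.ofReal (E ^ (2 * α))) (t : ℝ) :
    2 - 2 * (charFun ν t).re ≤ gC α ^ 2 * (|t| * E) ^ (2 * α) := by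
  have h := (ofReal_two_sub_two_re_charFun_le ν (p := 2 * α) (by linarith) (by linarith)
    t).trans (mul_le_mul_right hmoment _)
  rw [← ENNReal.ofReal_mul (by positivity), ENNReal.ofReal_le_ofReal_iff (by positivity)] at h
  calc 2 - 2 * (charFun ν t).re ≤ 2 ^ (2 - 2 * α) * |t| ^ (2 * α) * E ^ (2 * α) := h
    _ ≤ gC α ^ 2 * (|t| * E) ^ (2 * α) := by
      rw [Real.mul_rpow (abs_nonneg t) hE, ← mul_assoc]
      gcongr
      exact two_rpow_le_gC_sq hα0 hα1

lemma rpow_one_div_le_of_le_mul_rpow {x c u q : ℝ} (hx : 0 ≤ x) (hc : 0 < c) (hu : 0 ≤ u)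
    (hq : 0 < q) (h : x ≤ c * u ^ q) : (x / c) ^ (1 / q) ≤ u := by
  rw [one_div, Real.rpow_inv_le_iff_of_pos (by positivity) hu hq, div_le_iff₀' hc]
  exact h

theorem statement6_general
    {ℋ : Type*} [NormedAddCommGroup ℋ] [InnerProductSpace ℂ ℋ]
    (μ : ℋ → Measure ℝ)
    (hμtot : ∀ x : ℋ, μ x Set.univ = ENNReal.ofReal (‖x‖ ^ 2))
    (T : ℝ → ℋ →L[ℂ] ℋ)
    (hμT : ∀ (x : ℋ) (t : ℝ), ⟪x, T t x⟫ = ∫ s, Complex.exp (-(Complex.I * t * s)) ∂(μ x))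
    (α : ℝ) (hα : α ∈ Set.Ioc (0 : ℝ) 1)
    (En : ℝ) (hEn : ∃ x : ℋ, x ≠ 0 ∧ μ x {s : ℝ | |s| < En} ≠ 0)
    (φ₀ : ℋ) (hφ₀norm : ‖φ₀‖ = 1)
    (hφ₀E : specMoment μ (2 * α) φ₀ ≤ ENNReal.ofReal (En ^ (2 * α)))
    (t : ℝ) (ht : 0 ≤ t)
    (θ : ℝ) (hθ : θ = Real.arccos ((⟪φ₀, T t φ₀⟫).re)) :
    t ≥ ((2 - 2 * Real.cos θ) / gC α ^ 2) ^ (1 / (2 * α)) * (1 / En) ∧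
    (α = 1 / 2 → t ≥ (1 - Real.cos θ) / 2 * (1 / En)) := by
  obtain ⟨hα0, hα1⟩ := hα
  have hEnpos : 0 < En := by
    obtain ⟨x, -, hx⟩ := hEn
    obtain ⟨s, hs⟩ := nonempty_of_measure_ne_zero hx
    exact (abs_nonneg s).trans_lt hs
  have : IsProbabilityMeasure (μ φ₀) := ⟨by rw [hμtot, hφ₀norm]; norm_num⟩
  have hcharFun : ⟪φ₀, T t φ₀⟫ = charFun (μ φ₀) (-t) := by
    rw [hμT, charFun_apply_real]
    congr with s
    push_cast
    ring_nf
  have hcos : Real.cos θ = (charFun (μ φ₀) (-t)).re := by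
    have hre := (Complex.abs_re_le_norm _).trans (norm_charFun_le_one (μ := μ φ₀) (-t))
    rw [hθ, hcharFun, Real.cos_arccos (abs_le.1 hre).1 (abs_le.1 hre).2]
  have hbound : 2 - 2 * Real.cos θ ≤ gC α ^ 2 * (t * En) ^ (2 * α) := by
    have h := two_sub_two_re_charFun_le_gC_sq_mul (μ φ₀) hα0 hα1 hEnpos.le hφ₀E (-t)
    rwa [← hcos, abs_neg, abs_of_nonneg ht] at h
  have hspeed : t ≥ ((2 - 2 * Real.cos θ) / gC α ^ 2) ^ (1 / (2 * α)) * (1 / En) := by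
    rw [ge_iff_le, mul_one_div, div_le_iff₀ hEnpos]
    exact rpow_one_div_le_of_le_mul_rpow (by linarith [Real.cos_le_one θ])
      ((by positivity : (0 : ℝ) < 2 ^ (2 - 2 * α)).trans_le (two_rpow_le_gC_sq hα0 hα1))
      (by positivity) (by positivity) hbound
  refine ⟨hspeed, fun hhalf => ?_⟩
  rw [hhalf, gC_half] at hspeed
  convert hspeed using 2
  norm_num
  ring

/-- Quantum speed limit, closed systems, pure states.  `H` self-adjoint
(encoded by its unitary group `T t = e^{-itH}` and spectral measure family `μ`), `α ∈ (0,1]`,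
`E > inf σ(|H|)`, and `φ₀` a unit vector with `tr(|H|^{2α}|φ₀⟩⟨φ₀|) = ∫|s|^{2α} dμ_{φ₀} ≤ E^{2α}`.
If `φ(t) = T_t φ₀` is at relative angle `θ = arccos(Re⟪φ₀, φ(t)⟫) ∈ [0,π]` from `φ₀`,
then `t ≥ ((2−2cos θ)/g_α²)^{1/(2α)}·(1/E)`; for `α = 1/2`, `t ≥ ((1−cos θ)/2)·(1/E)`. -/
theorem statement6
    {ℋ : Type*} [NormedAddCommGroup ℋ] [InnerProductSpace ℂ ℋ] [CompleteSpace ℋ]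
    [TopologicalSpace.SeparableSpace ℋ]
    (H : ℋ →ₗ.[ℂ] ℋ) (hHsa : IsSelfAdjoint H)
    (μ : ℋ → Measure ℝ)
    (hμtot : ∀ x : ℋ, μ x Set.univ = ENNReal.ofReal (‖x‖ ^ 2))
    (hHdom : ∀ x : ℋ, x ∈ H.domain ↔ specMoment μ 2 x ≠ ∞)
    (hHval : ∀ x : H.domain, ⟪(x : ℋ), H x⟫ = ∫ s, (s : ℂ) ∂(μ x))
    (T : ℝ → ℋ →L[ℂ] ℋ)
    (hT0 : T 0 = ContinuousLinearMap.id ℂ ℋ)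
    (hTadd : ∀ t s : ℝ, (T t).comp (T s) = T (t + s))
    (hTiso : ∀ (t : ℝ) (x : ℋ), ‖T t x‖ = ‖x‖)
    (hμT : ∀ (x : ℋ) (t : ℝ), ⟪x, T t x⟫ = ∫ s, Complex.exp (-(Complex.I * t * s)) ∂(μ x))
    (α : ℝ) (hα : α ∈ Set.Ioc (0 : ℝ) 1)
    (En : ℝ) (hEn : ∃ x : ℋ, x ≠ 0 ∧ μ x {s : ℝ | |s| < En} ≠ 0)
    (φ₀ : ℋ) (hφ₀norm : ‖φ₀‖ = 1)
    (hφ₀E : specMoment μ (2 * α) φ₀ ≤ ENNReal.ofReal (En ^ (2 * α)))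
    (t : ℝ) (ht : 0 ≤ t)
    (θ : ℝ) (hθ : θ = Real.arccos ((⟪φ₀, T t φ₀⟫).re)) :
    t ≥ ((2 - 2 * Real.cos θ) / gC α ^ 2) ^ (1 / (2 * α)) * (1 / En) ∧
    (α = 1 / 2 → t ≥ (1 - Real.cos θ) / 2 * (1 / En)) :=
  statement6_general μ hμtot T hμT α hα En hEn φ₀ hφ₀norm hφ₀E t ht θ hθ

end
end

section
/- Let (T_t)_{t≥0} be a contraction semigroup on a Banach space X with generator A, and let α ∈ (0,1]. Then x ∈ F_α if and only if sup_{λ>0} ‖λ^α A(λI − A)^{-1} x‖ < ∞, and in that case |x|_{F_α} ≤ ζ_α · sup_{λ>0} ‖λ^α A(λI − A)^{-1} x‖. -/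
/-!
For `y` in the domain of the generator, `‖T t y - y‖ ≤ t ‖A y‖` by the mean value inequality,
so splitting `x = y + (x - y)` gives `‖T t x - x‖ ≤ t ‖A y‖ + 2 ‖x - y‖`. Taking `y = λ R λ x`,
for which `A y = λ (λ R λ x - x)`, a bound `‖λ R λ x - x‖ ≤ M λ^{-α}` yields
`‖T t x - x‖ ≤ (t λ + 2) M λ^{-α}`; the choice `λ = 2α / ((1 - α) t)` (or `λ → ∞` when `α = 1`)
produces the constant `ζ_α`.

Conversely, `R λ x` is the Laplace transform `Q = ∫₀^∞ e^{-λ s} T s x ds`: differentiating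
`T h Q = e^{λ h} ∫_h^∞ e^{-λ s} T s x ds` at `h = 0` shows `Q ∈ dom A` with `A Q = λ Q - x`.
Hence `λ R λ x - x = ∫₀^∞ λ e^{-λ s} (T s x - x) ds`, and `‖T s x - x‖ ≤ C s^α` gives
`‖λ R λ x - x‖ ≤ C Γ(α + 1) λ^{-α}`.
-/

open Filter Topology

noncomputable section

open MeasureTheory Set

theorem le_zetaC_mul_rpow {α t M u : ℝ} (hα : α ∈ Ioc 0 1) (ht : 0 < t)
    (h : ∀ lam : ℝ, 0 < lam → u ≤ (t * lam + 2) * (M * lam ^ (-α))) :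
    u ≤ zetaC α * M * t ^ α := by
  obtain ⟨hα0, hα1⟩ := hα
  rcases hα1.eq_or_lt with rfl | hα1
  · rw [zetaC, if_pos rfl, one_mul, Real.rpow_one]
    have hlim : Tendsto (fun lam : ℝ => M * t + 2 * M * lam⁻¹) atTop (𝓝 (M * t)) := by
      simpa using tendsto_const_nhds.add (tendsto_inv_atTop_zero.const_mul (2 * M))
    refine ge_of_tendsto hlim ?_
    filter_upwards [eventually_gt_atTop 0] with lam hlam
    refine (h lam hlam).trans_eq ?_
    rw [Real.rpow_neg_one]
    field_simp
  · set c := 2 * α / (1 - α)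
    have hc : 0 < c := div_pos (by linarith) (by linarith)
    calc u ≤ (t * (c / t) + 2) * (M * (c / t) ^ (-α)) := h _ (div_pos hc ht)
      _ = zetaC α * M * t ^ α := by
        rw [zetaC, if_neg hα1.ne, Real.rpow_sub hc, Real.rpow_one, Real.div_rpow hc.le ht.le,
          Real.rpow_neg hc.le, Real.rpow_neg ht.le]
        field_simp

structure IsContractionSemigroup {X : Type*} [NormedAddCommGroup X] [NormedSpace ℂ X]
    (T : ℝ → X →L[ℂ] X) : Prop where
  apply_zero : ∀ x, T 0 x = x
  apply_apply : ∀ t s : ℝ, 0 ≤ t → 0 ≤ s → ∀ x, T t (T s x) = T (t + s) x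
  norm_apply_le : ∀ t : ℝ, 0 ≤ t → ∀ x, ‖T t x‖ ≤ ‖x‖
  continuousOn_apply : ∀ x, ContinuousOn (fun t => T t x) (Ici 0)

section

variable {X : Type*} [NormedAddCommGroup X] [NormedSpace ℂ X]

def laplaceTransform (T : ℝ → X →L[ℂ] X) (lam : ℝ) (x : X) : X :=
  ∫ s in Ioi 0, Real.exp (-(lam * s)) • T s x

namespace IsContractionSemigroup

variable {T : ℝ → X →L[ℂ] X}

theorem hasDerivWithinAt_apply (hT : IsContractionSemigroup T) {y v : X}
    (hy : Tendsto (fun t : ℝ => t⁻¹ • (T t y - y)) (𝓝[>] 0) (𝓝 v)) {s : ℝ} (hs : 0 ≤ s) :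
    HasDerivWithinAt (fun t => T t y) (T s v) (Ici s) s := by
  rw [hasDerivWithinAt_iff_tendsto_slope, Ici_sdiff_left]
  have hshift : Tendsto (fun u : ℝ => u - s) (𝓝[>] s) (𝓝[>] 0) := by
    refine tendsto_nhdsWithin_iff.2 ⟨?_, ?_⟩
    · simpa using ((continuous_sub_right s).tendsto s).mono_left nhdsWithin_le_nhds
    · filter_upwards [self_mem_nhdsWithin] with u (hu : s < u) using sub_pos.2 hu
  refine (((T s).continuous.tendsto v).comp (hy.comp hshift)).congr' ?_
  filter_upwards [self_mem_nhdsWithin] with u (hu : s < u)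
  rw [Function.comp_apply, Function.comp_apply, slope_def_module, (T s).map_smul_of_tower, map_sub,
    hT.apply_apply s (u - s) hs (by linarith), add_sub_cancel]

theorem norm_apply_sub_le_mul (hT : IsContractionSemigroup T) {y v : X}
    (hy : Tendsto (fun t : ℝ => t⁻¹ • (T t y - y)) (𝓝[>] 0) (𝓝 v)) {t : ℝ} (ht : 0 ≤ t) :
    ‖T t y - y‖ ≤ t * ‖v‖ := by
  have := norm_image_sub_le_of_norm_deriv_right_le_segment (f := fun s => T s y)
    ((hT.continuousOn_apply y).mono Icc_subset_Ici_self)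
    (fun s hs => hT.hasDerivWithinAt_apply hy hs.1) (fun s hs => hT.norm_apply_le s hs.1 v) t
    (right_mem_Icc.2 ht)
  simpa [hT.apply_zero, mul_comm] using this

theorem norm_apply_sub_le_add (hT : IsContractionSemigroup T) {y v : X}
    (hy : Tendsto (fun t : ℝ => t⁻¹ • (T t y - y)) (𝓝[>] 0) (𝓝 v)) (x : X) {t : ℝ}
    (ht : 0 ≤ t) : ‖T t x - x‖ ≤ t * ‖v‖ + 2 * ‖x - y‖ := by
  calc ‖T t x - x‖ = ‖(T t y - y) + (T t (x - y) - (x - y))‖ := by rw [map_sub]; abel_nf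
    _ ≤ ‖T t y - y‖ + (‖T t (x - y)‖ + ‖x - y‖) :=
      (norm_add_le _ _).trans (add_le_add_right (norm_sub_le _ _) _)
    _ ≤ t * ‖v‖ + 2 * ‖x - y‖ := by
      linarith [hT.norm_apply_sub_le_mul hy ht, hT.norm_apply_le t ht (x - y)]

theorem norm_apply_sub_le_of_resolvent (hT : IsContractionSemigroup T) {A : X →ₗ.[ℂ] X}
    (hAval : ∀ y : A.domain,
      Tendsto (fun t : ℝ => t⁻¹ • (T t (y : X) - (y : X))) (𝓝[>] 0) (𝓝 (A y)))
    {lam : ℝ} (hlam : 0 ≤ lam) {x : X} (r : A.domain) (hr : (lam : ℂ) • (r : X) - A r = x)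
    {t : ℝ} (ht : 0 ≤ t) :
    ‖T t x - x‖ ≤ (t * lam + 2) * ‖(lam : ℂ) • (r : X) - x‖ := by
  have hAr : A ((lam : ℂ) • r) = (lam : ℂ) • ((lam : ℂ) • (r : X) - x) := by
    rw [A.map_smul, ← hr, sub_sub_cancel]
  have := hT.norm_apply_sub_le_add (hAr ▸ hAval ((lam : ℂ) • r)) x ht
  rw [norm_smul, Complex.norm_real, Real.norm_of_nonneg hlam, Submodule.coe_smul,
    norm_sub_rev x] at this
  linarith

theorem norm_apply_sub_le_zetaC_mul (hT : IsContractionSemigroup T) {A : X →ₗ.[ℂ] X}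
    (hAval : ∀ y : A.domain,
      Tendsto (fun t : ℝ => t⁻¹ • (T t (y : X) - (y : X))) (𝓝[>] 0) (𝓝 (A y)))
    {R : ℝ → X →L[ℂ] X} {x : X}
    (hRres : ∀ lam : ℝ, 0 < lam →
      ∃ hmem : R lam x ∈ A.domain, (lam : ℂ) • R lam x - A ⟨R lam x, hmem⟩ = x)
    {α M : ℝ} (hα : α ∈ Ioc 0 1)
    (hM : ∀ lam : ℝ, 0 < lam → ‖((lam ^ α : ℝ) : ℂ) • ((lam : ℂ) • R lam x - x)‖ ≤ M)
    {t : ℝ} (ht : 0 < t) : ‖T t x - x‖ ≤ zetaC α * M * t ^ α := by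
  refine le_zetaC_mul_rpow hα ht fun lam hlam => ?_
  obtain ⟨hmem, hres⟩ := hRres lam hlam
  have hdecay : ‖(lam : ℂ) • R lam x - x‖ ≤ M * lam ^ (-α) := by
    have := hM lam hlam
    rw [norm_smul, Complex.norm_real, Real.norm_of_nonneg (by positivity)] at this
    rw [Real.rpow_neg hlam.le, le_mul_inv_iff₀ (by positivity), mul_comm]
    exact this
  exact (hT.norm_apply_sub_le_of_resolvent hAval hlam.le ⟨_, hmem⟩ hres ht.le).trans
    (mul_le_mul_of_nonneg_left hdecay (by positivity))

theorem integrableOn_exp_smul_apply (hT : IsContractionSemigroup T) {lam : ℝ} (hlam : 0 < lam)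
    (x : X) : IntegrableOn (fun s => Real.exp (-(lam * s)) • T s x) (Ioi 0) := by
  refine Integrable.mono' ((exp_neg_integrableOn_Ioi 0 hlam).const_mul ‖x‖) ?_ ?_
  · have hcont : ContinuousOn (fun s => Real.exp (-(lam * s)) • T s x) (Ici 0) :=
      (by fun_prop : Continuous fun s : ℝ => Real.exp (-(lam * s))).continuousOn.smul
        (hT.continuousOn_apply x)
    exact (hcont.mono Ioi_subset_Ici_self).aestronglyMeasurable measurableSet_Ioi
  · filter_upwards [ae_restrict_mem measurableSet_Ioi] with s (hs : 0 < s)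
    rw [norm_smul, Real.norm_of_nonneg (Real.exp_pos _).le, neg_mul, mul_comm ‖x‖]
    exact mul_le_mul_of_nonneg_left (hT.norm_apply_le s hs.le x) (Real.exp_pos _).le

variable [CompleteSpace X]

theorem apply_laplaceTransform (hT : IsContractionSemigroup T) {lam : ℝ} (hlam : 0 < lam)
    (x : X) {h : ℝ} (hh : 0 ≤ h) :
    T h (laplaceTransform T lam x) =
      Real.exp (lam * h) • ∫ s in Ioi h, Real.exp (-(lam * s)) • T s x := by
  set g : ℝ → X := fun s => Real.exp (-(lam * s)) • T s x
  have hshift : ∫ s in Ioi 0, g (s + h) = ∫ s in Ioi h, g s := by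
    have := (measurePreserving_add_right volume h).setIntegral_preimage_emb
      (measurableEmbedding_addRight h) g (Ioi h)
    rwa [show (· + h) ⁻¹' Ioi h = Ioi 0 by ext s; simp] at this
  rw [laplaceTransform, ← (T h).integral_comp_comm (hT.integrableOn_exp_smul_apply hlam x),
    ← hshift, ← integral_smul]
  refine setIntegral_congr_fun measurableSet_Ioi fun s (hs : 0 < s) => ?_
  simp only [g, (T h).map_smul_of_tower, hT.apply_apply h s hh hs.le, smul_smul, ← Real.exp_add]
  ring_nf

theorem hasDerivWithinAt_integral_exp_smul_apply (hT : IsContractionSemigroup T) (lam : ℝ)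
    (x : X) :
    HasDerivWithinAt (fun u => ∫ s in (0 : ℝ)..u, Real.exp (-(lam * s)) • T s x) x (Ici 0) 0 := by
  have hcont : ContinuousOn (fun s => Real.exp (-(lam * s)) • T s x) (Ici 0) :=
    (by fun_prop : Continuous fun s : ℝ => Real.exp (-(lam * s))).continuousOn.smul
      (hT.continuousOn_apply x)
  simpa [hT.apply_zero] using intervalIntegral.integral_hasDerivWithinAt_right
    IntervalIntegrable.refl (s := Ici 0) (t := Ioi 0)
    ((hcont.mono Ioi_subset_Ici_self).stronglyMeasurableAtFilter_nhdsWithin measurableSet_Ioi 0)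
    ((hcont 0 self_mem_Ici).mono Ioi_subset_Ici_self)

theorem tendsto_slope_apply_laplaceTransform (hT : IsContractionSemigroup T) {lam : ℝ}
    (hlam : 0 < lam) (x : X) :
    Tendsto (fun h : ℝ => h⁻¹ • (T h (laplaceTransform T lam x) - laplaceTransform T lam x))
      (𝓝[>] 0) (𝓝 (lam • laplaceTransform T lam x - x)) := by
  set Q := laplaceTransform T lam x
  set F := fun u => ∫ s in (0 : ℝ)..u, Real.exp (-(lam * s)) • T s x
  have hF := hT.hasDerivWithinAt_integral_exp_smul_apply lam x
  have hF0 : Tendsto F (𝓝[>] 0) (𝓝 0) := by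
    simpa [F] using (hF.continuousWithinAt.mono Ioi_subset_Ici_self).tendsto
  have hFslope : Tendsto (fun h => h⁻¹ • F h) (𝓝[>] 0) (𝓝 x) := by
    rw [hasDerivWithinAt_iff_tendsto_slope, Ici_sdiff_left] at hF
    exact hF.congr fun h => by simp [F, slope_def_module]
  have hexp : Tendsto (fun h => h⁻¹ * (Real.exp (lam * h) - 1)) (𝓝[>] 0) (𝓝 lam) := by
    have hd : HasDerivAt (fun h => Real.exp (lam * h)) lam 0 := by
      simpa using ((hasDerivAt_id 0).const_mul lam).exp
    refine ((hasDerivAt_iff_tendsto_slope_zero.1 hd).mono_left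
      (nhdsWithin_mono 0 fun h (hh : 0 < h) => hh.ne')).congr fun h => ?_
    simp
  refine (by simpa using (hexp.smul (tendsto_const_nhds.sub hF0)).sub hFslope :
    Tendsto (fun h => (h⁻¹ * (Real.exp (lam * h) - 1)) • (Q - F h) - h⁻¹ • F h) (𝓝[>] 0)
      (𝓝 (lam • Q - x))).congr' ?_
  filter_upwards [self_mem_nhdsWithin] with h (hh : 0 < h)
  have htail : ∫ s in Ioi h, Real.exp (-(lam * s)) • T s x = Q - F h := by
    rw [eq_sub_iff_add_eq']
    exact intervalIntegral.integral_interval_add_Ioi (hT.integrableOn_exp_smul_apply hlam x)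
      ((hT.integrableOn_exp_smul_apply hlam x).mono_set (Ioi_subset_Ioi hh.le))
  rw [hT.apply_laplaceTransform hlam x hh.le, htail]
  module

theorem resolvent_eq_laplaceTransform (hT : IsContractionSemigroup T) {A : X →ₗ.[ℂ] X}
    (hAdom : ∀ y : X,
      (∃ v : X, Tendsto (fun t : ℝ => t⁻¹ • (T t y - y)) (𝓝[>] 0) (𝓝 v)) → y ∈ A.domain)
    (hAval : ∀ y : A.domain,
      Tendsto (fun t : ℝ => t⁻¹ • (T t (y : X) - (y : X))) (𝓝[>] 0) (𝓝 (A y)))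
    {lam : ℝ} (hlam : 0 < lam) {R : X →L[ℂ] X}
    (hR : ∀ y : A.domain, R ((lam : ℂ) • (y : X) - A y) = (y : X)) (x : X) :
    R x = laplaceTransform T lam x := by
  have hslope := hT.tendsto_slope_apply_laplaceTransform hlam x
  have hmem := hAdom _ ⟨_, hslope⟩
  have hA : A ⟨_, hmem⟩ = lam • laplaceTransform T lam x - x :=
    tendsto_nhds_unique (hAval ⟨_, hmem⟩) hslope
  simpa [hA, Complex.coe_smul] using hR ⟨_, hmem⟩

theorem smul_laplaceTransform_sub_eq_integral (hT : IsContractionSemigroup T) {lam : ℝ}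
    (hlam : 0 < lam) (x : X) :
    lam • laplaceTransform T lam x - x =
      ∫ s in Ioi 0, (lam * Real.exp (-(lam * s))) • (T s x - x) := by
  have hexp : IntegrableOn (fun s => lam * Real.exp (-(lam * s))) (Ioi 0) := by
    have := (exp_neg_integrableOn_Ioi 0 hlam).const_mul lam
    simp only [neg_mul] at this
    exact this
  have hmass : ∫ s in Ioi 0, lam * Real.exp (-(lam * s)) = 1 := by
    have := integral_exp_mul_Ioi (neg_lt_zero.2 hlam) 0
    simp only [neg_mul, mul_zero, Real.exp_zero] at this
    rw [integral_const_mul, this]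
    field_simp
  simp_rw [smul_sub]
  rw [integral_sub _ (hexp.smul_const x), integral_smul_const, hmass, one_smul, laplaceTransform,
    ← integral_smul]
  · simp_rw [smul_smul]
  · simpa only [Pi.smul_def, smul_smul] using (hT.integrableOn_exp_smul_apply hlam x).smul lam

theorem norm_rpow_smul_smul_laplaceTransform_sub_le (hT : IsContractionSemigroup T) {lam : ℝ}
    (hlam : 0 < lam) {x : X} {α C : ℝ} (hα : -1 < α)
    (hC : ∀ s : ℝ, 0 < s → ‖T s x - x‖ ≤ C * s ^ α) :
    ‖lam ^ α • (lam • laplaceTransform T lam x - x)‖ ≤ C * Real.Gamma (α + 1) := by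
  have hGamma := Real.integral_rpow_mul_exp_neg_mul_Ioi (a := α + 1) (by linarith) hlam
  rw [add_sub_cancel_right] at hGamma
  have hint : IntegrableOn (fun s => lam * C * (s ^ α * Real.exp (-(lam * s)))) (Ioi 0) := by
    have := integrableOn_rpow_mul_exp_neg_mul_rpow hα one_pos hlam
    simp only [Real.rpow_one, neg_mul] at this
    exact this.const_mul _
  have hbound : ‖lam • laplaceTransform T lam x - x‖ ≤
      ∫ s in Ioi 0, lam * C * (s ^ α * Real.exp (-(lam * s))) := by
    rw [hT.smul_laplaceTransform_sub_eq_integral hlam x]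
    refine norm_integral_le_of_norm_le hint ?_
    filter_upwards [ae_restrict_mem measurableSet_Ioi] with s (hs : 0 < s)
    rw [norm_smul, Real.norm_of_nonneg (by positivity)]
    calc lam * Real.exp (-(lam * s)) * ‖T s x - x‖
        ≤ lam * Real.exp (-(lam * s)) * (C * s ^ α) := by gcongr; exact hC s hs
      _ = lam * C * (s ^ α * Real.exp (-(lam * s))) := by ring
  rw [integral_const_mul, hGamma] at hbound
  rw [norm_smul, Real.norm_of_nonneg (by positivity)]
  calc lam ^ α * ‖lam • laplaceTransform T lam x - x‖
      ≤ lam ^ α * (lam * C * ((1 / lam) ^ (α + 1) * Real.Gamma (α + 1))) := by gcongr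
    _ = C * Real.Gamma (α + 1) := by
      rw [one_div, Real.inv_rpow hlam.le, Real.rpow_add_one hlam.ne']
      field_simp

end IsContractionSemigroup

end

/-- Favard spaces via resolvents.  Let `(T_t)_{t≥0}` be a contraction
semigroup on a Banach space `X` with generator `A` and resolvents `R λ = (λI − A)^{-1}`
(`λ > 0`).  Since `A(λI − A)^{-1}x = λ R_λ x − x`, the statement reads: `x ∈ F_α`
(i.e. `∃ C, ∀ t > 0, ‖T_t x − x‖ ≤ C t^α`) iff `sup_{λ>0} ‖λ^α A(λI−A)^{-1}x‖ < ∞`, and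
whenever the latter is bounded by `M`, the Favard seminorm satisfies
`‖T_t x − x‖ ≤ ζ_α M t^α` for all `t > 0`. -/
theorem statement10
    {X : Type*} [NormedAddCommGroup X] [NormedSpace ℂ X] [CompleteSpace X]
    (T : ℝ → X →L[ℂ] X)
    (hT0 : T 0 = ContinuousLinearMap.id ℂ X)
    (hTadd : ∀ t s : ℝ, 0 ≤ t → 0 ≤ s → (T t).comp (T s) = T (t + s))
    (hTcontr : ∀ t : ℝ, 0 ≤ t → ∀ x : X, ‖T t x‖ ≤ ‖x‖)
    (hTcont : ∀ x : X, ContinuousOn (fun t : ℝ => T t x) (Set.Ici 0))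
    (A : X →ₗ.[ℂ] X)
    (hAdom : ∀ x : X, x ∈ A.domain ↔
      ∃ y : X, Tendsto (fun t : ℝ => t⁻¹ • (T t x - x)) (𝓝[>] 0) (𝓝 y))
    (hAval : ∀ x : A.domain,
      Tendsto (fun t : ℝ => t⁻¹ • (T t (x : X) - (x : X))) (𝓝[>] 0) (𝓝 (A x)))
    -- the resolvents `R λ = (λI − A)^{-1}` of the generator, for `λ > 0`
    (R : ℝ → X →L[ℂ] X)
    (hRres : ∀ lam : ℝ, 0 < lam → ∀ x : X,
      ∃ hmem : R lam x ∈ A.domain, (lam : ℂ) • R lam x - A ⟨R lam x, hmem⟩ = x)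
    (hRleft : ∀ lam : ℝ, 0 < lam → ∀ x : A.domain,
      R lam ((lam : ℂ) • (x : X) - A x) = (x : X))
    (α : ℝ) (hα : α ∈ Set.Ioc (0 : ℝ) 1)
    (x : X) :
    ((∃ C : ℝ, ∀ t : ℝ, 0 < t → ‖T t x - x‖ ≤ C * t ^ α) ↔
      (∃ M : ℝ, ∀ lam : ℝ, 0 < lam →
        ‖((lam ^ α : ℝ) : ℂ) • ((lam : ℂ) • R lam x - x)‖ ≤ M)) ∧
    (∀ M : ℝ,
      (∀ lam : ℝ, 0 < lam →
        ‖((lam ^ α : ℝ) : ℂ) • ((lam : ℂ) • R lam x - x)‖ ≤ M) →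
      ∀ t : ℝ, 0 < t → ‖T t x - x‖ ≤ zetaC α * M * t ^ α) := by
  have hT : IsContractionSemigroup T :=
    ⟨fun x => by rw [hT0]; rfl, fun t s ht hs x => by rw [← hTadd t s ht hs]; rfl, hTcontr, hTcont⟩
  have hFavard : ∀ M : ℝ,
      (∀ lam : ℝ, 0 < lam → ‖((lam ^ α : ℝ) : ℂ) • ((lam : ℂ) • R lam x - x)‖ ≤ M) →
      ∀ t : ℝ, 0 < t → ‖T t x - x‖ ≤ zetaC α * M * t ^ α :=
    fun M hM t ht => hT.norm_apply_sub_le_zetaC_mul hAval (hRres · · x) hα hM ht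
  refine ⟨⟨fun ⟨C, hC⟩ => ⟨C * Real.Gamma (α + 1), fun lam hlam => ?_⟩,
    fun ⟨M, hM⟩ => ⟨zetaC α * M, hFavard M hM⟩⟩, hFavard⟩
  rw [hT.resolvent_eq_laplaceTransform (fun y => (hAdom y).2) hAval hlam (hRleft lam hlam),
    Complex.coe_smul, Complex.coe_smul]
  exact hT.norm_rpow_smul_smul_laplaceTransform_sub_le hlam (by linarith [hα.1]) hC

end
end

section
/- Let A₀ and A = A₀ + B be generators of contraction semigroups on a Banach space X, let α ∈ (0,1], and let B be relatively A₀-bounded with A₀-bound a ≥ 0 and bound b ≥ 0 (i.e. D(A₀) ⊆ D(B) and ‖Bx‖ ≤ a‖A₀x‖ + b‖x‖ on D(A₀)). If x ∈ X satisfies sup_{λ>0} ‖λ^α A₀(λI − A₀)^{-1} x‖ ≤ k for some k ≥ 0, then for every c > 0: sup_{λ>0} ‖λ^α A(λI − A)^{-1} x‖ ≤ max{2c^α ‖x‖, 3bc^{α−1}‖x‖ + (1+3a)k} < ∞. In particular the Favard space F_α of the semigroup generated by A₀ is contained in the Favard space F_α of the semigroup generated by A. -/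
/-!
For `λ ≤ c`, contractivity of the resolvent gives `‖λR(λ)x - x‖ ≤ 2‖x‖`. For `λ > c`, put
`w = R₀(λ)x`; since `(λ - A)w = x - Bw`, we get `λR(λ)x - x = (λw - x) + λR(λ)Bw`, and the relative
bound `‖Bw‖ ≤ a‖λw - x‖ + b‖w‖` together with `λ‖w‖ ≤ ‖x‖` yields
`λ^α‖λR(λ)x - x‖ ≤ (1 + a)k + bλ^(α-1)‖x‖`.

The Favard estimate follows from the resolvent bound by comparing `x` with `y = λR(λ)x ∈ D(A)` at
`λ = t⁻¹`: `‖T_t x - x‖ ≤ 2‖x - y‖ + t‖Ay‖`, and `t‖Ay‖ = ‖x - y‖` because `Ay = λ(y - x)`.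
-/

open Filter Topology

section ContractionSemigroup

variable {X : Type*} [NormedAddCommGroup X] [NormedSpace ℂ X]

theorem mul_norm_le_of_smul_sub_generator_eq (T : ℝ → X →L[ℂ] X)
    (hTcontr : ∀ t : ℝ, 0 ≤ t → ∀ x : X, ‖T t x‖ ≤ ‖x‖) (A : X →ₗ.[ℂ] X)
    (hAval : ∀ x : A.domain,
      Tendsto (fun t : ℝ => t⁻¹ • (T t (x : X) - (x : X))) (𝓝[>] 0) (𝓝 (A x)))
    {lam : ℝ} (hlam : 0 < lam) {y z : X} (hy : y ∈ A.domain)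
    (hyz : (lam : ℂ) • y - A ⟨y, hy⟩ = z) :
    lam * ‖y‖ ≤ ‖z‖ := by
  subst hyz
  refine ge_of_tendsto (tendsto_const_nhds.sub (hAval ⟨y, hy⟩)).norm ?_
  filter_upwards [self_mem_nhdsWithin] with t (ht : 0 < t)
  have hsplit : (lam : ℂ) • y - t⁻¹ • (T t y - y) = (lam + t⁻¹) • y - t⁻¹ • T t y := by
    rw [Complex.coe_smul, add_smul, smul_sub]; abel
  calc lam * ‖y‖ = (lam + t⁻¹) * ‖y‖ - t⁻¹ * ‖y‖ := by ring
    _ ≤ ‖(lam + t⁻¹) • y‖ - ‖t⁻¹ • T t y‖ := by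
      rw [norm_smul_of_nonneg (by positivity), norm_smul_of_nonneg (by positivity)]
      gcongr
      exact hTcontr t ht.le y
    _ ≤ ‖(lam : ℂ) • y - t⁻¹ • (T t y - y)‖ := hsplit ▸ norm_sub_norm_le _ _

theorem norm_apply_nat_mul_sub_le (T : ℝ → X →L[ℂ] X)
    (hT0 : T 0 = ContinuousLinearMap.id ℂ X)
    (hTadd : ∀ t s : ℝ, 0 ≤ t → 0 ≤ s → (T t).comp (T s) = T (t + s))
    (hTcontr : ∀ t : ℝ, 0 ≤ t → ∀ x : X, ‖T t x‖ ≤ ‖x‖) (n : ℕ) {s : ℝ} (hs : 0 ≤ s) (y : X) :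
    ‖T (n * s) y - y‖ ≤ n * ‖T s y - y‖ := by
  induction n with
  | zero => simp [hT0]
  | succ n ih =>
    have hns : 0 ≤ (n : ℝ) * s := by positivity
    have hsplit : T ((n + 1 : ℕ) * s) y - y = T (n * s) (T s y - y) + (T (n * s) y - y) := by
      rw [show ((n + 1 : ℕ) : ℝ) * s = n * s + s by push_cast; ring, ← hTadd _ _ hns hs,
        map_sub]
      simp
    calc ‖T ((n + 1 : ℕ) * s) y - y‖
        ≤ ‖T (n * s) (T s y - y)‖ + ‖T (n * s) y - y‖ := hsplit ▸ norm_add_le _ _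
      _ ≤ ‖T s y - y‖ + n * ‖T s y - y‖ := add_le_add (hTcontr _ hns _) ih
      _ = (n + 1 : ℕ) * ‖T s y - y‖ := by push_cast; ring


theorem norm_apply_sub_le_mul_norm_generator (T : ℝ → X →L[ℂ] X)
    (hT0 : T 0 = ContinuousLinearMap.id ℂ X)
    (hTadd : ∀ t s : ℝ, 0 ≤ t → 0 ≤ s → (T t).comp (T s) = T (t + s))
    (hTcontr : ∀ t : ℝ, 0 ≤ t → ∀ x : X, ‖T t x‖ ≤ ‖x‖) (A : X →ₗ.[ℂ] X)
    (hAval : ∀ x : A.domain,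
      Tendsto (fun t : ℝ => t⁻¹ • (T t (x : X) - (x : X))) (𝓝[>] 0) (𝓝 (A x)))
    (y : A.domain) {t : ℝ} (ht : 0 < t) :
    ‖T t (y : X) - y‖ ≤ t * ‖A y‖ := by
  have hsteps : Tendsto (fun n : ℕ => t / n) atTop (𝓝[>] 0) :=
    tendsto_nhdsWithin_of_tendsto_nhds_of_eventually_within _
      (tendsto_const_div_atTop_nhds_zero_nat t)
      (eventually_gt_atTop 0 |>.mono fun n hn => div_pos ht (Nat.cast_pos.2 hn))
  refine ge_of_tendsto ((((hAval y).comp hsteps).norm).const_mul t) ?_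
  filter_upwards [eventually_gt_atTop 0] with n hn
  have hn' : (0 : ℝ) < n := Nat.cast_pos.2 hn
  have hdiv := norm_apply_nat_mul_sub_le T hT0 hTadd hTcontr n (div_pos ht hn').le y
  rw [mul_div_cancel₀ t hn'.ne'] at hdiv
  calc ‖T t (y : X) - y‖ ≤ n * ‖T (t / n) (y : X) - y‖ := hdiv
    _ = t * ‖(t / n)⁻¹ • (T (t / n) (y : X) - y)‖ := by
      rw [norm_smul_of_nonneg (by positivity)]
      field_simp

theorem norm_apply_sub_le_of_mem_domain (T : ℝ → X →L[ℂ] X)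
    (hT0 : T 0 = ContinuousLinearMap.id ℂ X)
    (hTadd : ∀ t s : ℝ, 0 ≤ t → 0 ≤ s → (T t).comp (T s) = T (t + s))
    (hTcontr : ∀ t : ℝ, 0 ≤ t → ∀ x : X, ‖T t x‖ ≤ ‖x‖) (A : X →ₗ.[ℂ] X)
    (hAval : ∀ x : A.domain,
      Tendsto (fun t : ℝ => t⁻¹ • (T t (x : X) - (x : X))) (𝓝[>] 0) (𝓝 (A x)))
    (x : X) (y : A.domain) {t : ℝ} (ht : 0 < t) :
    ‖T t x - x‖ ≤ 2 * ‖x - y‖ + t * ‖A y‖ := by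
  have hsplit : T t x - x = (T t (x - y) - (x - y)) + (T t (y : X) - y) := by
    rw [map_sub]; abel
  calc ‖T t x - x‖ ≤ (‖T t (x - y)‖ + ‖x - y‖) + ‖T t (y : X) - y‖ :=
        hsplit ▸ (norm_add_le _ _).trans (by gcongr; exact norm_sub_le _ _)
    _ ≤ (‖x - y‖ + ‖x - y‖) + t * ‖A y‖ := by
        gcongr
        · exact hTcontr t ht.le _
        · exact norm_apply_sub_le_mul_norm_generator T hT0 hTadd hTcontr A hAval y ht
    _ = 2 * ‖x - y‖ + t * ‖A y‖ := by ring

theorem generator_smul_resolvent (A : X →ₗ.[ℂ] X) {lam : ℝ} {x r : X} (hr : r ∈ A.domain)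
    (hrx : (lam : ℂ) • r - A ⟨r, hr⟩ = x) :
    A ⟨(lam : ℂ) • r, A.domain.smul_mem _ hr⟩ = (lam : ℂ) • ((lam : ℂ) • r - x) := by
  rw [← hrx, sub_sub_cancel]
  exact A.map_smul _ ⟨r, hr⟩

theorem norm_apply_sub_le_of_resolvent_bound (T : ℝ → X →L[ℂ] X)
    (hT0 : T 0 = ContinuousLinearMap.id ℂ X)
    (hTadd : ∀ t s : ℝ, 0 ≤ t → 0 ≤ s → (T t).comp (T s) = T (t + s))
    (hTcontr : ∀ t : ℝ, 0 ≤ t → ∀ x : X, ‖T t x‖ ≤ ‖x‖) (A : X →ₗ.[ℂ] X)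
    (hAval : ∀ x : A.domain,
      Tendsto (fun t : ℝ => t⁻¹ • (T t (x : X) - (x : X))) (𝓝[>] 0) (𝓝 (A x)))
    (R : ℝ → X →L[ℂ] X)
    (hRres : ∀ lam : ℝ, 0 < lam → ∀ x : X,
      ∃ hmem : R lam x ∈ A.domain, (lam : ℂ) • R lam x - A ⟨R lam x, hmem⟩ = x)
    {α M : ℝ} {x : X} (hM : ∀ lam : ℝ, 0 < lam → lam ^ α * ‖(lam : ℂ) • R lam x - x‖ ≤ M)
    {t : ℝ} (ht : 0 < t) :
    ‖T t x - x‖ ≤ 3 * M * t ^ α := by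
  obtain ⟨hmem, hres⟩ := hRres t⁻¹ (inv_pos.2 ht) x
  have hdist : ‖((t⁻¹ : ℝ) : ℂ) • R t⁻¹ x - x‖ ≤ M * t ^ α := by
    have := hM t⁻¹ (inv_pos.2 ht)
    rwa [Real.inv_rpow ht.le, inv_mul_le_iff₀ (by positivity), mul_comm] at this
  have hgen := generator_smul_resolvent A hmem hres
  calc ‖T t x - x‖ ≤ 2 * ‖x - ((t⁻¹ : ℝ) : ℂ) • R t⁻¹ x‖
        + t * ‖A ⟨((t⁻¹ : ℝ) : ℂ) • R t⁻¹ x, A.domain.smul_mem _ hmem⟩‖ :=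
        norm_apply_sub_le_of_mem_domain T hT0 hTadd hTcontr A hAval x ⟨_, _⟩ ht
    _ = 3 * ‖((t⁻¹ : ℝ) : ℂ) • R t⁻¹ x - x‖ := by
        rw [hgen, Complex.coe_smul t⁻¹ (_ - x), norm_smul_of_nonneg (inv_pos.2 ht).le,
          norm_sub_rev, ← mul_assoc, mul_inv_cancel₀ ht.ne']
        ring
    _ ≤ 3 * M * t ^ α := by linarith

end ContractionSemigroup

section Perturbation

variable {X : Type*} [NormedAddCommGroup X] [NormedSpace ℂ X]

theorem smul_resolvent_sub_eq_add (A₀ A B : X →ₗ.[ℂ] X) (hBdom : A₀.domain ≤ B.domain)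
    (hAeq : A.domain = A₀.domain)
    (hAsum : ∀ (x : X) (hx : x ∈ A₀.domain) (hx' : x ∈ A.domain),
      A ⟨x, hx'⟩ = A₀ ⟨x, hx⟩ + B ⟨x, hBdom hx⟩)
    (R : X →L[ℂ] X) {lam : ℝ} (hRleft : ∀ y : A.domain, R ((lam : ℂ) • (y : X) - A y) = y)
    {w x : X} (hw : w ∈ A₀.domain) (hwx : (lam : ℂ) • w - A₀ ⟨w, hw⟩ = x) :
    (lam : ℂ) • R x - x = ((lam : ℂ) • w - x) + (lam : ℂ) • R (B ⟨w, hBdom hw⟩) := by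
  have hwA : w ∈ A.domain := hAeq ▸ hw
  have hperturbed : (lam : ℂ) • w - A ⟨w, hwA⟩ = x - B ⟨w, hBdom hw⟩ := by
    rw [hAsum w hw hwA, ← hwx]; abel
  have hRx : R x = w + R (B ⟨w, hBdom hw⟩) := by
    have hRw : R x - R (B ⟨w, hBdom hw⟩) = w := by
      simpa only [hperturbed, map_sub] using hRleft ⟨w, hwA⟩
    exact sub_eq_iff_eq_add.1 hRw
  rw [hRx, smul_add]; abel

theorem rpow_mul_norm_smul_resolvent_sub_le (A₀ A B : X →ₗ.[ℂ] X)
    (hBdom : A₀.domain ≤ B.domain) (hAeq : A.domain = A₀.domain)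
    (hAsum : ∀ (x : X) (hx : x ∈ A₀.domain) (hx' : x ∈ A.domain),
      A ⟨x, hx'⟩ = A₀ ⟨x, hx⟩ + B ⟨x, hBdom hx⟩)
    {a b : ℝ} (ha : 0 ≤ a) (hb : 0 ≤ b)
    (hrel : ∀ x : A₀.domain, ‖B ⟨(x : X), hBdom x.2⟩‖ ≤ a * ‖A₀ x‖ + b * ‖(x : X)‖)
    (R : X →L[ℂ] X) {lam : ℝ} (hlam : 0 < lam)
    (hRleft : ∀ y : A.domain, R ((lam : ℂ) • (y : X) - A y) = y)
    (hRcontr : ∀ z : X, lam * ‖R z‖ ≤ ‖z‖) {w x : X} (hw : w ∈ A₀.domain)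
    (hwx : (lam : ℂ) • w - A₀ ⟨w, hw⟩ = x) (hwcontr : lam * ‖w‖ ≤ ‖x‖) {α k : ℝ}
    (hk : lam ^ α * ‖(lam : ℂ) • w - x‖ ≤ k) :
    lam ^ α * ‖(lam : ℂ) • R x - x‖ ≤ (1 + a) * k + b * lam ^ (α - 1) * ‖x‖ := by
  set p := B ⟨w, hBdom hw⟩
  have hA₀w : A₀ ⟨w, hw⟩ = (lam : ℂ) • w - x := by rw [← hwx, sub_sub_cancel]
  have hp : ‖p‖ ≤ a * ‖(lam : ℂ) • w - x‖ + b * ‖w‖ := hA₀w ▸ hrel ⟨w, hw⟩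
  have hw' : lam ^ α * ‖w‖ ≤ lam ^ (α - 1) * ‖x‖ := by
    rw [Real.rpow_sub_one hlam.ne', div_mul_eq_mul_div, le_div_iff₀ hlam]
    calc lam ^ α * ‖w‖ * lam = lam ^ α * (lam * ‖w‖) := by ring
      _ ≤ lam ^ α * ‖x‖ := by gcongr
  have hsum : ‖(lam : ℂ) • R x - x‖ ≤ ‖(lam : ℂ) • w - x‖ + ‖p‖ := by
    rw [smul_resolvent_sub_eq_add A₀ A B hBdom hAeq hAsum R hRleft hw hwx]
    refine (norm_add_le _ _).trans (add_le_add_right ?_ _)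
    rw [Complex.coe_smul, norm_smul_of_nonneg hlam.le]
    exact hRcontr p
  have hlamα : 0 ≤ lam ^ α := by positivity
  calc lam ^ α * ‖(lam : ℂ) • R x - x‖
      ≤ lam ^ α * ‖(lam : ℂ) • w - x‖ + a * (lam ^ α * ‖(lam : ℂ) • w - x‖)
        + b * (lam ^ α * ‖w‖) := by
        nlinarith [mul_le_mul_of_nonneg_left hsum hlamα, mul_le_mul_of_nonneg_left hp hlamα]
    _ ≤ k + a * k + b * (lam ^ (α - 1) * ‖x‖) := by gcongr
    _ = (1 + a) * k + b * lam ^ (α - 1) * ‖x‖ := by ring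

end Perturbation

theorem rpow_mul_le_max {α a b k c lam N r : ℝ} (hα : α ∈ Set.Ioc (0 : ℝ) 1) (ha : 0 ≤ a)
    (hb : 0 ≤ b) (hk : 0 ≤ k) (hc : 0 < c) (hlam : 0 < lam) (hr : 0 ≤ r) (hsmall : r ≤ 2 * N)
    (hlarge : lam ^ α * r ≤ (1 + a) * k + b * lam ^ (α - 1) * N) :
    lam ^ α * r ≤ max (2 * c ^ α * N) (3 * b * c ^ (α - 1) * N + (1 + 3 * a) * k) := by
  rcases le_or_gt lam c with hle | hgt
  · refine le_max_of_le_left ?_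
    calc lam ^ α * r ≤ c ^ α * (2 * N) := by
          gcongr
          exact hα.1.le
      _ = 2 * c ^ α * N := by ring
  · refine le_max_of_le_right (hlarge.trans ?_)
    have hN : 0 ≤ N := by linarith
    have hpow : lam ^ (α - 1) ≤ c ^ (α - 1) :=
      Real.rpow_le_rpow_of_nonpos hc hgt.le (by linarith [hα.2])
    have : b * lam ^ (α - 1) * N ≤ b * c ^ (α - 1) * N := by gcongr
    nlinarith [mul_nonneg ha hk, mul_nonneg (mul_nonneg hb (Real.rpow_nonneg hc.le (α - 1))) hN]

theorem statement12_general
    {X : Type*} [NormedAddCommGroup X] [NormedSpace ℂ X]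
    -- the two contraction semigroups
    (T₀ T : ℝ → X →L[ℂ] X)
    (hT₀contr : ∀ t : ℝ, 0 ≤ t → ∀ x : X, ‖T₀ t x‖ ≤ ‖x‖)
    (hT0 : T 0 = ContinuousLinearMap.id ℂ X)
    (hTadd : ∀ t s : ℝ, 0 ≤ t → 0 ≤ s → (T t).comp (T s) = T (t + s))
    (hTcontr : ∀ t : ℝ, 0 ≤ t → ∀ x : X, ‖T t x‖ ≤ ‖x‖)
    -- their generators
    (A₀ A : X →ₗ.[ℂ] X)
    (hA₀val : ∀ x : A₀.domain,
      Tendsto (fun t : ℝ => t⁻¹ • (T₀ t (x : X) - (x : X))) (𝓝[>] 0) (𝓝 (A₀ x)))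
    (hAval : ∀ x : A.domain,
      Tendsto (fun t : ℝ => t⁻¹ • (T t (x : X) - (x : X))) (𝓝[>] 0) (𝓝 (A x)))
    -- A = A₀ + B with B relatively A₀-bounded, A₀-bound a and bound b
    (B : X →ₗ.[ℂ] X) (hBdom : A₀.domain ≤ B.domain)
    (hAeq : A.domain = A₀.domain)
    (hAsum : ∀ (x : X) (hx : x ∈ A₀.domain) (hx' : x ∈ A.domain),
      A ⟨x, hx'⟩ = A₀ ⟨x, hx⟩ + B ⟨x, hBdom hx⟩)
    (a b : ℝ) (ha : 0 ≤ a) (hb : 0 ≤ b)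
    (hrel : ∀ x : A₀.domain, ‖B ⟨(x : X), hBdom x.2⟩‖ ≤ a * ‖A₀ x‖ + b * ‖(x : X)‖)
    -- the resolvents of A₀ and of A, for λ > 0
    (R₀ R : ℝ → X →L[ℂ] X)
    (hR₀res : ∀ lam : ℝ, 0 < lam → ∀ x : X,
      ∃ hmem : R₀ lam x ∈ A₀.domain, (lam : ℂ) • R₀ lam x - A₀ ⟨R₀ lam x, hmem⟩ = x)
    (hRres : ∀ lam : ℝ, 0 < lam → ∀ x : X,
      ∃ hmem : R lam x ∈ A.domain, (lam : ℂ) • R lam x - A ⟨R lam x, hmem⟩ = x)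
    (hRleft : ∀ lam : ℝ, 0 < lam → ∀ x : A.domain,
      R lam ((lam : ℂ) • (x : X) - A x) = (x : X))
    (α : ℝ) (hα : α ∈ Set.Ioc (0 : ℝ) 1)
    (x : X) (k : ℝ) (hk : 0 ≤ k)
    (hbound : ∀ lam : ℝ, 0 < lam →
      ‖((lam ^ α : ℝ) : ℂ) • ((lam : ℂ) • R₀ lam x - x)‖ ≤ k) :
    (∀ c : ℝ, 0 < c → ∀ lam : ℝ, 0 < lam →
      ‖((lam ^ α : ℝ) : ℂ) • ((lam : ℂ) • R lam x - x)‖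
        ≤ max (2 * c ^ α * ‖x‖) (3 * b * c ^ (α - 1) * ‖x‖ + (1 + 3 * a) * k)) ∧
    ((∃ C : ℝ, ∀ t : ℝ, 0 < t → ‖T₀ t x - x‖ ≤ C * t ^ α) →
      (∃ C : ℝ, ∀ t : ℝ, 0 < t → ‖T t x - x‖ ≤ C * t ^ α)) := by
  have hnorm : ∀ lam : ℝ, 0 < lam → ∀ v : X, ‖((lam ^ α : ℝ) : ℂ) • v‖ = lam ^ α * ‖v‖ :=
    fun lam hlam v => by rw [Complex.coe_smul, norm_smul_of_nonneg (by positivity)]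
  have hRcontr : ∀ lam : ℝ, 0 < lam → ∀ z : X, lam * ‖R lam z‖ ≤ ‖z‖ := fun lam hlam z =>
    let ⟨hmem, hres⟩ := hRres lam hlam z
    mul_norm_le_of_smul_sub_generator_eq T hTcontr A hAval hlam hmem hres
  have hsmall : ∀ lam : ℝ, 0 < lam → ‖(lam : ℂ) • R lam x - x‖ ≤ 2 * ‖x‖ := fun lam hlam => by
    rw [Complex.coe_smul]
    calc ‖lam • R lam x - x‖ ≤ lam * ‖R lam x‖ + ‖x‖ := by
          rw [← norm_smul_of_nonneg hlam.le]; exact norm_sub_le _ _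
      _ ≤ 2 * ‖x‖ := by linarith [hRcontr lam hlam x]
  have hlarge : ∀ lam : ℝ, 0 < lam → lam ^ α * ‖(lam : ℂ) • R lam x - x‖
      ≤ (1 + a) * k + b * lam ^ (α - 1) * ‖x‖ := fun lam hlam =>
    let ⟨hmem, hres⟩ := hR₀res lam hlam x
    rpow_mul_norm_smul_resolvent_sub_le A₀ A B hBdom hAeq hAsum ha hb hrel (R lam) hlam
      (hRleft lam hlam) (hRcontr lam hlam) hmem hres
      (mul_norm_le_of_smul_sub_generator_eq T₀ hT₀contr A₀ hA₀val hlam hmem hres)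
      (hnorm lam hlam _ ▸ hbound lam hlam)
  have hresolvent : ∀ c : ℝ, 0 < c → ∀ lam : ℝ, 0 < lam →
      lam ^ α * ‖(lam : ℂ) • R lam x - x‖
        ≤ max (2 * c ^ α * ‖x‖) (3 * b * c ^ (α - 1) * ‖x‖ + (1 + 3 * a) * k) :=
    fun c hc lam hlam => rpow_mul_le_max hα ha hb hk hc hlam (norm_nonneg _)
      (hsmall lam hlam) (hlarge lam hlam)
  refine ⟨fun c hc lam hlam => hnorm lam hlam _ ▸ hresolvent c hc lam hlam, fun _ => ?_⟩
  exact ⟨_, fun t => norm_apply_sub_le_of_resolvent_bound T hT0 hTadd hTcontr A hAval R hRres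
    (hresolvent 1 one_pos)⟩

/-- Perturbation of Favard spaces.  Let `A₀` and `A = A₀ + B` be
generators of contraction semigroups `(T₀ₜ)`, `(Tₜ)` on a Banach space `X`, with resolvents
`R₀ λ = (λI − A₀)^{-1}`, `R λ = (λI − A)^{-1}` for `λ > 0`, and let `B` be relatively
`A₀`-bounded with `A₀`-bound `a` and bound `b`.  Using
`A(λI − A)^{-1}x = λ R_λ x − x`, if `sup_{λ>0} ‖λ^α A₀(λI − A₀)^{-1}x‖ ≤ k` then for every
`c > 0`: `sup_{λ>0} ‖λ^α A(λI − A)^{-1}x‖ ≤ max{2c^α‖x‖, 3bc^{α−1}‖x‖ + (1+3a)k}`.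
In particular the Favard space `F_α` of the semigroup generated by `A₀` is contained in the
Favard space `F_α` of the semigroup generated by `A`. -/
theorem statement12
    {X : Type*} [NormedAddCommGroup X] [NormedSpace ℂ X] [CompleteSpace X]
    -- the two contraction semigroups
    (T₀ T : ℝ → X →L[ℂ] X)
    (hT₀0 : T₀ 0 = ContinuousLinearMap.id ℂ X)
    (hT₀add : ∀ t s : ℝ, 0 ≤ t → 0 ≤ s → (T₀ t).comp (T₀ s) = T₀ (t + s))
    (hT₀contr : ∀ t : ℝ, 0 ≤ t → ∀ x : X, ‖T₀ t x‖ ≤ ‖x‖)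
    (hT₀cont : ∀ x : X, ContinuousOn (fun t : ℝ => T₀ t x) (Set.Ici 0))
    (hT0 : T 0 = ContinuousLinearMap.id ℂ X)
    (hTadd : ∀ t s : ℝ, 0 ≤ t → 0 ≤ s → (T t).comp (T s) = T (t + s))
    (hTcontr : ∀ t : ℝ, 0 ≤ t → ∀ x : X, ‖T t x‖ ≤ ‖x‖)
    (hTcont : ∀ x : X, ContinuousOn (fun t : ℝ => T t x) (Set.Ici 0))
    -- their generators
    (A₀ A : X →ₗ.[ℂ] X)
    (hA₀dom : ∀ x : X, x ∈ A₀.domain ↔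
      ∃ y : X, Tendsto (fun t : ℝ => t⁻¹ • (T₀ t x - x)) (𝓝[>] 0) (𝓝 y))
    (hA₀val : ∀ x : A₀.domain,
      Tendsto (fun t : ℝ => t⁻¹ • (T₀ t (x : X) - (x : X))) (𝓝[>] 0) (𝓝 (A₀ x)))
    (hAdom : ∀ x : X, x ∈ A.domain ↔
      ∃ y : X, Tendsto (fun t : ℝ => t⁻¹ • (T t x - x)) (𝓝[>] 0) (𝓝 y))
    (hAval : ∀ x : A.domain,
      Tendsto (fun t : ℝ => t⁻¹ • (T t (x : X) - (x : X))) (𝓝[>] 0) (𝓝 (A x)))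
    -- A = A₀ + B with B relatively A₀-bounded, A₀-bound a and bound b
    (B : X →ₗ.[ℂ] X) (hBdom : A₀.domain ≤ B.domain)
    (hAeq : A.domain = A₀.domain)
    (hAsum : ∀ (x : X) (hx : x ∈ A₀.domain) (hx' : x ∈ A.domain),
      A ⟨x, hx'⟩ = A₀ ⟨x, hx⟩ + B ⟨x, hBdom hx⟩)
    (a b : ℝ) (ha : 0 ≤ a) (hb : 0 ≤ b)
    (hrel : ∀ x : A₀.domain, ‖B ⟨(x : X), hBdom x.2⟩‖ ≤ a * ‖A₀ x‖ + b * ‖(x : X)‖)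
    -- the resolvents of A₀ and of A, for λ > 0
    (R₀ R : ℝ → X →L[ℂ] X)
    (hR₀res : ∀ lam : ℝ, 0 < lam → ∀ x : X,
      ∃ hmem : R₀ lam x ∈ A₀.domain, (lam : ℂ) • R₀ lam x - A₀ ⟨R₀ lam x, hmem⟩ = x)
    (hR₀left : ∀ lam : ℝ, 0 < lam → ∀ x : A₀.domain,
      R₀ lam ((lam : ℂ) • (x : X) - A₀ x) = (x : X))
    (hRres : ∀ lam : ℝ, 0 < lam → ∀ x : X,
      ∃ hmem : R lam x ∈ A.domain, (lam : ℂ) • R lam x - A ⟨R lam x, hmem⟩ = x)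
    (hRleft : ∀ lam : ℝ, 0 < lam → ∀ x : A.domain,
      R lam ((lam : ℂ) • (x : X) - A x) = (x : X))
    (α : ℝ) (hα : α ∈ Set.Ioc (0 : ℝ) 1)
    (x : X) (k : ℝ) (hk : 0 ≤ k)
    (hbound : ∀ lam : ℝ, 0 < lam →
      ‖((lam ^ α : ℝ) : ℂ) • ((lam : ℂ) • R₀ lam x - x)‖ ≤ k) :
    (∀ c : ℝ, 0 < c → ∀ lam : ℝ, 0 < lam →
      ‖((lam ^ α : ℝ) : ℂ) • ((lam : ℂ) • R lam x - x)‖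
        ≤ max (2 * c ^ α * ‖x‖) (3 * b * c ^ (α - 1) * ‖x‖ + (1 + 3 * a) * k)) ∧
    ((∃ C : ℝ, ∀ t : ℝ, 0 < t → ‖T₀ t x - x‖ ≤ C * t ^ α) →
      (∃ C : ℝ, ∀ t : ℝ, 0 < t → ‖T t x - x‖ ≤ C * t ^ α)) :=
  statement12_general T₀ T hT₀contr hT0 hTadd hTcontr A₀ A hA₀val hAval B hBdom hAeq hAsum a b ha hb
    hrel R₀ R hR₀res hRres hRleft α hα x k hk hbound
end

section
/- Let ρ, σ be states (positive trace-one operators) on a separable complex Hilbert space and q > 1. Then the q-Tsallis entropy satisfies the global Lipschitz estimate |T_q(ρ) − T_q(σ)| ≤ (q/(q−1)) ‖ρ − σ‖_q ≤ (q/(q−1)) ‖ρ − σ‖₁. If in addition ‖ρ‖_q ≥ δ > 0 and ‖ρ − σ‖_q ≤ ε < δ, then the q-Rényi entropy satisfies the local Lipschitz estimate |S_q(ρ) − S_q(σ)| ≤ (q/((q−1)(δ−ε))) ‖ρ − σ‖_q ≤ (q/((q−1)(δ−ε))) ‖ρ − σ‖₁. -/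
open scoped ENNReal NNReal

noncomputable section

local notation "⟪" x ", " y "⟫" => @inner ℂ _ _ x y

variable {𝓗 : Type*} [NormedAddCommGroup 𝓗] [InnerProductSpace ℂ 𝓗]

/-- The Schatten `q`-norm `‖A‖_q ∈ [0,∞]` (for `q ≥ 1`) of a bounded operator, via its
variational characterization
`‖A‖_q = sup { (Σᵢ |⟪eᵢ, A fᵢ⟫|^q)^{1/q} : (eᵢ), (fᵢ) finite orthonormal families }`
(the generalized diagonals of `A` are weakly majorized by its singular values).
For `q = 1` this is the trace norm. -/
def schattenN (q : ℝ) (A : 𝓗 →L[ℂ] 𝓗) : ℝ≥0∞ :=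
  ⨆ (n : ℕ) (e : Fin n → 𝓗) (f : Fin n → 𝓗) (_ : Orthonormal ℂ e) (_ : Orthonormal ℂ f),
    (∑ i, ENNReal.ofReal (‖⟪e i, A (f i)⟫‖ ^ q)) ^ (1 / q)

/-- Trace of a positive operator. -/
def opTr (A : 𝓗 →L[ℂ] 𝓗) : ℝ≥0∞ :=
  ⨆ (n : ℕ) (e : Fin n → 𝓗) (_ : Orthonormal ℂ e),
    ENNReal.ofReal (∑ i, (⟪A (e i), e i⟫).re)

/-- Positivity of a bounded operator. -/
def IsPosOp (A : 𝓗 →L[ℂ] 𝓗) : Prop :=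
  (∀ x y : 𝓗, ⟪A x, y⟫ = ⟪x, A y⟫) ∧ ∀ x : 𝓗, 0 ≤ (⟪A x, x⟫).re

/-- A state: positive operator of unit trace. -/
def IsStateOp (A : 𝓗 →L[ℂ] 𝓗) : Prop := IsPosOp A ∧ opTr A = 1

/-- The `q`-Tsallis entropy `T_q(ρ) = (1 − ‖ρ‖_q^q)/(q−1)`. -/
def tsallis (q : ℝ) (ρ : 𝓗 →L[ℂ] 𝓗) : ℝ :=
  (1 - (schattenN q ρ).toReal ^ q) / (q - 1)

/-- The `q`-Rényi entropy `S_q(ρ) = (q/(q−1)) log ‖ρ‖_q`. -/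
def renyi (q : ℝ) (ρ : 𝓗 →L[ℂ] 𝓗) : ℝ :=
  q / (q - 1) * Real.log ((schattenN q ρ).toReal)

/-!
For a state, `‖ρ‖_q ≤ ‖ρ‖₁ ≤ tr ρ = 1`, the middle inequality coming from the Cauchy–Schwarz
inequality for the positive semi-inner product `⟪x, ρ y⟫`. Both entropies are functions of the
single number `‖ρ‖_q ∈ [0, 1]`, which moves by at most `‖ρ − σ‖_q` (triangle inequality). So the
estimates are the Lipschitz bounds of `x ↦ x ^ q` on `[0, 1]` (constant `q`) and of `log` on
`[δ − ε, ∞)` (constant `1 / (δ − ε)`), the latter applying because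
`‖σ‖_q ≥ ‖ρ‖_q − ‖ρ − σ‖_q ≥ δ − ε`.
-/

theorem ENNReal.rpow_sum_rpow_le_sum {ι : Type*} (s : Finset ι) {q : ℝ} (hq : 1 ≤ q)
    (x : ι → ℝ≥0∞) : (∑ i ∈ s, x i ^ q) ^ (1 / q) ≤ ∑ i ∈ s, x i := by
  have hq0 : 0 < q := zero_lt_one.trans_le hq
  classical
  induction s using Finset.induction with
  | empty => simpa using hq0
  | @insert a s ha ih =>
    rw [Finset.sum_insert ha, Finset.sum_insert ha]
    calc (x a ^ q + ∑ i ∈ s, x i ^ q) ^ (1 / q)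
        = (x a ^ q + ((∑ i ∈ s, x i ^ q) ^ (1 / q)) ^ q) ^ (1 / q) := by
          rw [one_div, ENNReal.rpow_inv_rpow hq0.ne']
      _ ≤ x a + (∑ i ∈ s, x i ^ q) ^ (1 / q) := ENNReal.rpow_add_rpow_le_add _ _ hq
      _ ≤ x a + ∑ i ∈ s, x i := add_le_add_right ih _

theorem Real.abs_rpow_sub_rpow_le {q a b : ℝ} (hq : 1 ≤ q) (ha : a ∈ Set.Icc (0 : ℝ) 1)
    (hb : b ∈ Set.Icc (0 : ℝ) 1) : |a ^ q - b ^ q| ≤ q * |a - b| := by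
  have hderiv : ∀ x ∈ Set.Icc (0 : ℝ) 1,
      HasDerivWithinAt (fun x : ℝ => x ^ q) (q * x ^ (q - 1)) (Set.Icc 0 1) x :=
    fun x _ => (Real.hasDerivAt_rpow_const (Or.inr hq)).hasDerivWithinAt
  have hbound : ∀ x ∈ Set.Icc (0 : ℝ) 1, ‖q * x ^ (q - 1)‖ ≤ q := fun x hx => by
    rw [Real.norm_eq_abs, abs_of_nonneg (by have := hx.1; positivity)]
    exact mul_le_of_le_one_right (by linarith) (Real.rpow_le_one hx.1 hx.2 (by linarith))
  exact Convex.norm_image_sub_le_of_norm_hasDerivWithin_le hderiv hbound (convex_Icc 0 1) hb ha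

theorem Real.abs_log_sub_log_le {m a b : ℝ} (hm : 0 < m) (ha : m ≤ a) (hb : m ≤ b) :
    |Real.log a - Real.log b| ≤ |a - b| / m := by
  have hderiv : ∀ x ∈ Set.Ici m, HasDerivWithinAt Real.log x⁻¹ (Set.Ici m) x :=
    fun x hx => (Real.hasDerivAt_log (hm.trans_le hx).ne').hasDerivWithinAt
  have hbound : ∀ x ∈ Set.Ici m, ‖x⁻¹‖ ≤ m⁻¹ := fun x hx => by
    rw [Real.norm_eq_abs, abs_of_pos (inv_pos.2 (hm.trans_le hx))]
    exact inv_anti₀ hm hx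
  rw [div_eq_inv_mul]
  exact Convex.norm_image_sub_le_of_norm_hasDerivWithin_le hderiv hbound (convex_Ici m) hb ha

theorem le_schattenN (q : ℝ) (A : 𝓗 →L[ℂ] 𝓗) {n : ℕ} {e f : Fin n → 𝓗}
    (he : Orthonormal ℂ e) (hf : Orthonormal ℂ f) :
    (∑ i, ENNReal.ofReal (‖⟪e i, A (f i)⟫‖ ^ q)) ^ (1 / q) ≤ schattenN q A :=
  le_iSup_of_le n <| le_iSup_of_le e <| le_iSup_of_le f <| le_iSup_of_le he <|
    le_iSup_of_le hf le_rfl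

theorem schattenN_le {q : ℝ} {A : 𝓗 →L[ℂ] 𝓗} {C : ℝ≥0∞}
    (h : ∀ (n : ℕ) (e f : Fin n → 𝓗), Orthonormal ℂ e → Orthonormal ℂ f →
      (∑ i, ENNReal.ofReal (‖⟪e i, A (f i)⟫‖ ^ q)) ^ (1 / q) ≤ C) :
    schattenN q A ≤ C :=
  iSup_le fun n => iSup_le fun e => iSup_le fun f => iSup_le fun he => iSup_le fun hf =>
    h n e f he hf

theorem le_opTr (A : 𝓗 →L[ℂ] 𝓗) {n : ℕ} {e : Fin n → 𝓗} (he : Orthonormal ℂ e) :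
    ENNReal.ofReal (∑ i, (⟪A (e i), e i⟫).re) ≤ opTr A :=
  le_iSup_of_le n <| le_iSup_of_le e <| le_iSup_of_le he le_rfl

theorem schattenN_neg (q : ℝ) (A : 𝓗 →L[ℂ] 𝓗) : schattenN q (-A) = schattenN q A := by
  simp only [schattenN, neg_apply, inner_neg_right, norm_neg]

theorem schattenN_add_le {q : ℝ} (hq : 1 ≤ q) (A B : 𝓗 →L[ℂ] 𝓗) :
    schattenN q (A + B) ≤ schattenN q A + schattenN q B := by
  refine schattenN_le fun n e f he hf => ?_
  have hq0 : 0 ≤ q := zero_le_one.trans hq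
  let entry : (𝓗 →L[ℂ] 𝓗) → Fin n → ℝ≥0∞ := fun T i => ENNReal.ofReal ‖⟪e i, T (f i)⟫‖
  have hentry : ∀ T i, ENNReal.ofReal (‖⟪e i, T (f i)⟫‖ ^ q) = entry T i ^ q := fun T i =>
    (ENNReal.ofReal_rpow_of_nonneg (norm_nonneg _) hq0).symm
  have hentry_add : ∀ i, entry (A + B) i ≤ entry A i + entry B i := fun i => by
    simp only [entry, add_apply, inner_add_right]
    exact (ENNReal.ofReal_le_ofReal (norm_add_le _ _)).trans ENNReal.ofReal_add_le
  simp only [hentry]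
  calc (∑ i, entry (A + B) i ^ q) ^ (1 / q)
      ≤ (∑ i, (entry A i + entry B i) ^ q) ^ (1 / q) := by gcongr with i; exact hentry_add i
    _ ≤ (∑ i, entry A i ^ q) ^ (1 / q) + (∑ i, entry B i ^ q) ^ (1 / q) :=
      ENNReal.Lp_add_le _ _ _ hq
    _ ≤ schattenN q A + schattenN q B := by
      simp only [← hentry]
      exact add_le_add (le_schattenN q A he hf) (le_schattenN q B he hf)

theorem schattenN_sub_le {q : ℝ} (hq : 1 ≤ q) (A B : 𝓗 →L[ℂ] 𝓗) :
    schattenN q (A - B) ≤ schattenN q A + schattenN q B := by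
  simpa only [sub_eq_add_neg, schattenN_neg] using schattenN_add_le hq A (-B)

theorem abs_toReal_schattenN_sub_le {q : ℝ} (hq : 1 ≤ q) {A B : 𝓗 →L[ℂ] 𝓗}
    (hA : schattenN q A ≠ ⊤) (hB : schattenN q B ≠ ⊤) :
    |(schattenN q A).toReal - (schattenN q B).toReal| ≤ (schattenN q (A - B)).toReal := by
  have hAB : schattenN q (A - B) ≠ ⊤ :=
    ne_top_of_le_ne_top (ENNReal.add_ne_top.2 ⟨hA, hB⟩) (schattenN_sub_le hq A B)
  have hA_le : (schattenN q A).toReal ≤ (schattenN q B).toReal + (schattenN q (A - B)).toReal :=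
    ENNReal.toReal_le_add (by simpa using schattenN_add_le hq B (A - B)) hB hAB
  have hB_le : (schattenN q B).toReal ≤ (schattenN q A).toReal + (schattenN q (A - B)).toReal := by
    refine ENNReal.toReal_le_add ?_ hA hAB
    simpa [← schattenN_neg q (A - B)] using schattenN_add_le hq A (-(A - B))
  exact abs_sub_le_iff.2 ⟨by linarith, by linarith⟩

theorem schattenN_le_schattenN_one {q : ℝ} (hq : 1 ≤ q) (A : 𝓗 →L[ℂ] 𝓗) :
    schattenN q A ≤ schattenN 1 A := by
  refine schattenN_le fun n e f he hf => ?_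
  calc (∑ i, ENNReal.ofReal (‖⟪e i, A (f i)⟫‖ ^ q)) ^ (1 / q)
      = (∑ i, ENNReal.ofReal ‖⟪e i, A (f i)⟫‖ ^ q) ^ (1 / q) := by
        simp only [ENNReal.ofReal_rpow_of_nonneg (norm_nonneg _) (zero_le_one.trans hq)]
    _ ≤ ∑ i, ENNReal.ofReal ‖⟪e i, A (f i)⟫‖ := ENNReal.rpow_sum_rpow_le_sum _ hq _
    _ ≤ schattenN 1 A := by simpa using le_schattenN 1 A he hf

namespace IsPosOp

variable {A : 𝓗 →L[ℂ] 𝓗}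

abbrev preInnerProductCore (hA : IsPosOp A) : PreInnerProductSpace.Core ℂ 𝓗 where
  inner x y := ⟪x, A y⟫
  conj_inner_symm x y := by rw [inner_conj_symm, hA.1]
  re_inner_nonneg x := by rw [← hA.1]; exact hA.2 x
  add_left x y z := inner_add_left x y (A z)
  smul_left x y r := inner_smul_left x (A y) r

theorem norm_inner_mul_norm_inner_le (hA : IsPosOp A) (x y : 𝓗) :
    ‖⟪x, A y⟫‖ * ‖⟪y, A x⟫‖ ≤ (⟪x, A x⟫).re * (⟪y, A y⟫).re :=
  @InnerProductSpace.Core.inner_mul_inner_self_le ℂ 𝓗 _ _ _ hA.preInnerProductCore x y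

theorem two_mul_norm_inner_le (hA : IsPosOp A) (x y : 𝓗) :
    2 * ‖⟪x, A y⟫‖ ≤ (⟪A x, x⟫).re + (⟪A y, y⟫).re := by
  have hcs := hA.norm_inner_mul_norm_inner_le x y
  rw [← hA.1 y x, ← inner_conj_symm (A y) x, Complex.norm_conj, ← hA.1 x x, ← hA.1 y y] at hcs
  nlinarith [hA.2 x, hA.2 y, norm_nonneg ⟪x, A y⟫, sq_nonneg ((⟪A x, x⟫).re - (⟪A y, y⟫).re)]

theorem schattenN_one_le_opTr (hA : IsPosOp A) : schattenN 1 A ≤ opTr A := by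
  refine schattenN_le fun n e f he hf => ?_
  have hsum : ∀ g : Fin n → 𝓗, ∑ i, ENNReal.ofReal (⟪A (g i), g i⟫).re
      = ENNReal.ofReal (∑ i, (⟪A (g i), g i⟫).re) := fun g =>
    (ENNReal.ofReal_sum_of_nonneg fun i _ => hA.2 (g i)).symm
  rw [← ENNReal.mul_le_mul_iff_right (a := 2) two_ne_zero ENNReal.ofNat_ne_top]
  calc 2 * (∑ i, ENNReal.ofReal (‖⟪e i, A (f i)⟫‖ ^ (1 : ℝ))) ^ (1 / (1 : ℝ))
      = ∑ i, ENNReal.ofReal (2 * ‖⟪e i, A (f i)⟫‖) := by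
        simp [Finset.mul_sum, ENNReal.ofReal_mul]
    _ ≤ ∑ i, (ENNReal.ofReal (⟪A (e i), e i⟫).re + ENNReal.ofReal (⟪A (f i), f i⟫).re) := by
        gcongr with i
        exact (ENNReal.ofReal_le_ofReal (hA.two_mul_norm_inner_le _ _)).trans
          ENNReal.ofReal_add_le
    _ ≤ opTr A + opTr A := by
        rw [Finset.sum_add_distrib, hsum, hsum]
        exact add_le_add (le_opTr A he) (le_opTr A hf)
    _ = 2 * opTr A := (two_mul _).symm

end IsPosOp

namespace IsStateOp

variable {q : ℝ} {ρ σ : 𝓗 →L[ℂ] 𝓗}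

theorem schattenN_le_one (hq : 1 ≤ q) (hρ : IsStateOp ρ) : schattenN q ρ ≤ 1 :=
  (schattenN_le_schattenN_one hq ρ).trans (hρ.1.schattenN_one_le_opTr.trans_eq hρ.2)

theorem toReal_schattenN_mem_Icc (hq : 1 ≤ q) (hρ : IsStateOp ρ) :
    (schattenN q ρ).toReal ∈ Set.Icc (0 : ℝ) 1 :=
  ⟨ENNReal.toReal_nonneg,
    ENNReal.toReal_le_of_le_ofReal zero_le_one (by simpa using hρ.schattenN_le_one hq)⟩

theorem abs_toReal_schattenN_sub_le (hq : 1 ≤ q) (hρ : IsStateOp ρ) (hσ : IsStateOp σ) :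
    |(schattenN q ρ).toReal - (schattenN q σ).toReal| ≤ (schattenN q (ρ - σ)).toReal :=
  _root_.abs_toReal_schattenN_sub_le hq (ne_top_of_le_ne_top ENNReal.one_ne_top
    (hρ.schattenN_le_one hq)) (ne_top_of_le_ne_top ENNReal.one_ne_top (hσ.schattenN_le_one hq))

theorem abs_tsallis_sub_le (hq : 1 < q) (hρ : IsStateOp ρ) (hσ : IsStateOp σ) :
    |tsallis q ρ - tsallis q σ| ≤ q / (q - 1) * (schattenN q (ρ - σ)).toReal := by
  have hq1 : 0 < q - 1 := sub_pos.2 hq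
  calc |tsallis q ρ - tsallis q σ|
      = |(schattenN q ρ).toReal ^ q - (schattenN q σ).toReal ^ q| / (q - 1) := by
        rw [tsallis, tsallis, div_sub_div_same, sub_sub_sub_cancel_left, abs_div,
          abs_of_pos hq1, abs_sub_comm]
    _ ≤ q * (schattenN q (ρ - σ)).toReal / (q - 1) := by
        gcongr
        exact (Real.abs_rpow_sub_rpow_le hq.le (hρ.toReal_schattenN_mem_Icc hq.le)
          (hσ.toReal_schattenN_mem_Icc hq.le)).trans
          (by gcongr; exact hρ.abs_toReal_schattenN_sub_le hq.le hσ)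
    _ = q / (q - 1) * (schattenN q (ρ - σ)).toReal := by ring

theorem abs_renyi_sub_le {δ ε : ℝ} (hq : 1 < q) (hρ : IsStateOp ρ) (hσ : IsStateOp σ)
    (hεδ : ε < δ) (hδ : δ ≤ (schattenN q ρ).toReal) (hε : (schattenN q (ρ - σ)).toReal ≤ ε) :
    |renyi q ρ - renyi q σ| ≤ q / ((q - 1) * (δ - ε)) * (schattenN q (ρ - σ)).toReal := by
  have hq1 : 0 < q - 1 := sub_pos.2 hq
  have hm : 0 < δ - ε := sub_pos.2 hεδ
  have hdist := hρ.abs_toReal_schattenN_sub_le hq.le hσ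
  have hρ_ge : δ - ε ≤ (schattenN q ρ).toReal := by linarith [(schattenN q (ρ - σ)).toReal_nonneg]
  have hσ_ge : δ - ε ≤ (schattenN q σ).toReal := by linarith [(abs_sub_le_iff.1 hdist).1]
  calc |renyi q ρ - renyi q σ|
      = q / (q - 1) * |Real.log (schattenN q ρ).toReal - Real.log (schattenN q σ).toReal| := by
        rw [renyi, renyi, ← mul_sub, abs_mul, abs_of_pos (by positivity)]
    _ ≤ q / (q - 1) * ((schattenN q (ρ - σ)).toReal / (δ - ε)) := by
        gcongr
        exact (Real.abs_log_sub_log_le hm hρ_ge hσ_ge).trans (by gcongr)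
    _ = q / ((q - 1) * (δ - ε)) * (schattenN q (ρ - σ)).toReal := by
        field_simp

end IsStateOp

theorem statement19_general
    {𝓗 : Type*} [NormedAddCommGroup 𝓗] [InnerProductSpace ℂ 𝓗]
    (q : ℝ) (hq : 1 < q)
    (ρ σ : 𝓗 →L[ℂ] 𝓗) (hρ : IsStateOp ρ) (hσ : IsStateOp σ) :
    -- global Lipschitz estimate for the q-Tsallis entropy, and ‖ρ−σ‖_q ≤ ‖ρ−σ‖₁
    (|tsallis q ρ - tsallis q σ| ≤ q / (q - 1) * (schattenN q (ρ - σ)).toReal ∧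
      schattenN q (ρ - σ) ≤ schattenN 1 (ρ - σ)) ∧
    -- local Lipschitz estimate for the q-Rényi entropy
    (∀ δ ε : ℝ, 0 < δ → 0 ≤ ε → ε < δ →
      δ ≤ (schattenN q ρ).toReal →
      schattenN q (ρ - σ) ≤ ENNReal.ofReal ε →
      |renyi q ρ - renyi q σ| ≤ q / ((q - 1) * (δ - ε)) * (schattenN q (ρ - σ)).toReal) := by
  refine ⟨⟨hρ.abs_tsallis_sub_le hq hσ, schattenN_le_schattenN_one hq.le _⟩, ?_⟩
  intro δ ε _ hε hεδ hδ hρσ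
  exact hρ.abs_renyi_sub_le hq hσ hεδ hδ (ENNReal.toReal_le_of_le_ofReal hε hρσ)

/-- Lipschitz continuity of Tsallis and Rényi entropies.  Let `ρ, σ` be
states on a separable complex Hilbert space, `q > 1`.  Then
`|T_q(ρ) − T_q(σ)| ≤ (q/(q−1)) ‖ρ−σ‖_q ≤ (q/(q−1)) ‖ρ−σ‖₁`; if moreover `‖ρ‖_q ≥ δ > 0`
and `‖ρ−σ‖_q ≤ ε < δ`, then
`|S_q(ρ) − S_q(σ)| ≤ (q/((q−1)(δ−ε))) ‖ρ−σ‖_q ≤ (q/((q−1)(δ−ε))) ‖ρ−σ‖₁`. -/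
theorem statement19
    {𝓗 : Type*} [NormedAddCommGroup 𝓗] [InnerProductSpace ℂ 𝓗] [CompleteSpace 𝓗]
    [TopologicalSpace.SeparableSpace 𝓗]
    (q : ℝ) (hq : 1 < q)
    (ρ σ : 𝓗 →L[ℂ] 𝓗) (hρ : IsStateOp ρ) (hσ : IsStateOp σ) :
    -- global Lipschitz estimate for the q-Tsallis entropy, and ‖ρ−σ‖_q ≤ ‖ρ−σ‖₁
    (|tsallis q ρ - tsallis q σ| ≤ q / (q - 1) * (schattenN q (ρ - σ)).toReal ∧
      schattenN q (ρ - σ) ≤ schattenN 1 (ρ - σ)) ∧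
    -- local Lipschitz estimate for the q-Rényi entropy
    (∀ δ ε : ℝ, 0 < δ → 0 ≤ ε → ε < δ →
      δ ≤ (schattenN q ρ).toReal →
      schattenN q (ρ - σ) ≤ ENNReal.ofReal ε →
      |renyi q ρ - renyi q σ| ≤ q / ((q - 1) * (δ - ε)) * (schattenN q (ρ - σ)).toReal) :=
  statement19_general q hq ρ σ hρ hσ

end
end
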